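/- arXiv:2201.04907 — 4 statements merged into one kernel-verified Lean document; each statement's English description precedes it below -/
import Mathlib

section
/- Let N ≥ 2 be an integer and s ∈ (0,1). Define ψ(t) = t^(1+2s) ∫_0^1 (h(1-h))^((N-3)/2) / (t²+h)^((N+2s)/2) dh for t ∈ (0,1]. Then the limit of ψ(t) as t → 0⁺ exists and equals Γ(1/2+s)Γ((N-1)/2)/Γ((N+2s)/2). -/
open MeasureTheory Real Filter

lemma integrableOn_betaIoc {p q : ℝ} (hp : -1 < p) (hq : -1 < q) :
    IntegrableOn (fun x : ℝ => x ^ p * (1 - x) ^ q) (Set.Ioc (0:ℝ) 1) := by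
  have h := Complex.betaIntegral_convergent (u := (p+1 : ℂ)) (v := (q+1 : ℂ))
    (by simp; linarith) (by simp; linarith)
  have h1 : IntegrableOn (fun x : ℝ => (x:ℂ) ^ (p:ℂ) * (1-(x:ℂ)) ^ (q:ℂ)) (Set.Ioc (0:ℝ) 1) := by
    simpa using h.1
  have h2 := h1.re
  refine h2.congr ?_
  filter_upwards [ae_restrict_mem measurableSet_Ioc] with x hx
  have hx0 : (0:ℝ) ≤ x := hx.1.le
  have hx1 : (0:ℝ) ≤ 1 - x := by linarith [hx.2]
  rw [← Complex.ofReal_cpow hx0, ← Complex.ofReal_one, ← Complex.ofReal_sub,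
    ← Complex.ofReal_cpow hx1, ← Complex.ofReal_mul]
  simp

lemma integrableOn_betaIoo {p q : ℝ} (hp : -1 < p) (hq : -1 < q) :
    IntegrableOn (fun x : ℝ => x ^ p * (1 - x) ^ q) (Set.Ioo (0:ℝ) 1) :=
  (integrableOn_betaIoc hp hq).mono_set Set.Ioo_subset_Ioc_self

lemma betaIntegral_real {a b : ℝ} (ha : 0 < a) (hb : 0 < b) :
    ∫ x in Set.Ioo (0:ℝ) 1, x ^ (a-1) * (1-x) ^ (b-1)
      = Real.Gamma a * Real.Gamma b / Real.Gamma (a+b) := by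
  have key := Complex.Gamma_mul_Gamma_eq_betaIntegral (s := (a:ℂ)) (t := (b:ℂ))
    (by simpa using ha) (by simpa using hb)
  have hbeta : Complex.betaIntegral (a:ℂ) (b:ℂ)
      = ((∫ x in Set.Ioo (0:ℝ) 1, x ^ (a-1) * (1-x) ^ (b-1) : ℝ) : ℂ) := by
    rw [Complex.betaIntegral, intervalIntegral.integral_of_le zero_le_one,
      ← MeasureTheory.integral_Ioc_eq_integral_Ioo
        (f := fun x : ℝ => x ^ (a-1) * (1-x) ^ (b-1))]
    rw [show (((∫ x in Set.Ioc (0:ℝ) 1, x ^ (a-1) * (1-x) ^ (b-1)) : ℝ) : ℂ)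
        = ∫ x in Set.Ioc (0:ℝ) 1, ((x ^ (a-1) * (1-x) ^ (b-1) : ℝ) : ℂ) from
      (integral_ofReal (f := fun x : ℝ => x ^ (a-1) * (1-x) ^ (b-1))).symm]
    refine setIntegral_congr_fun measurableSet_Ioc (fun x hx => ?_)
    have hx0 : (0:ℝ) ≤ x := hx.1.le
    have hx1 : (0:ℝ) ≤ 1 - x := by linarith [hx.2]
    push_cast [Complex.ofReal_cpow hx0, Complex.ofReal_cpow hx1]
    ring
  rw [hbeta, ← Complex.ofReal_add, Complex.Gamma_ofReal, Complex.Gamma_ofReal,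
    Complex.Gamma_ofReal, ← Complex.ofReal_mul, ← Complex.ofReal_mul] at key
  have hkey := Complex.ofReal_injective key
  have hG : Real.Gamma (a+b) ≠ 0 := (Real.Gamma_pos_of_pos (by linarith)).ne'
  field_simp
  linarith [hkey]
lemma pt (s e t x : ℝ) (ht : 0 < t) (hx0 : 0 < x) (h1x : 0 < 1 - x)
    (hy : 0 < 1 - (1+t^2)*x) :
    t ^ (1+2*s) * ((t^2/(1-x)^2) *
      ((t^2*(x*(1-(1+t^2)*x))/(1-x)^2) ^ e / (t^2/(1-x)) ^ (e+s+3/2)))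
      = x ^ e * (1-(1+t^2)*x) ^ e * (1-x) ^ (s-1/2-e) := by
  have h2 : (0:ℝ) < t^2 := by positivity
  have h1x2 : (0:ℝ) < (1-x)^2 := by positivity
  rw [Real.div_rpow (by positivity) (by positivity),
      Real.div_rpow (by positivity) (by positivity),
      Real.mul_rpow (by positivity) (by positivity),
      Real.mul_rpow (by positivity) (by positivity)]
  simp only [Real.rpow_def_of_pos ht, Real.rpow_def_of_pos h2,
    Real.rpow_def_of_pos hx0, Real.rpow_def_of_pos hy,
    Real.rpow_def_of_pos h1x, Real.rpow_def_of_pos h1x2, Real.log_pow]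
  rw [show (t:ℝ)^2 = Real.exp (2*Real.log t) from by
        rw [← Real.exp_log h2, Real.log_pow]; push_cast; ring_nf,
      show (1-x)^2 = Real.exp (2*Real.log (1-x)) from by
        rw [← Real.exp_log h1x2, Real.log_pow]; push_cast; ring_nf]
  simp only [← Real.exp_add, ← Real.exp_sub, div_eq_mul_inv, ← Real.exp_neg]
  rw [Real.exp_eq_exp]
  push_cast
  ring

lemma cov (s e t : ℝ) (ht : 0 < t) :
    t ^ (1+2*s) * ∫ h in Set.Ioo (0:ℝ) (1/2), (h*(1-h)) ^ e / (t^2+h) ^ (e+s+3/2)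
      = ∫ x in Set.Ioo (0:ℝ) (1/(1+2*t^2)), x ^ e * (1-(1+t^2)*x) ^ e * (1-x) ^ (s-1/2-e) := by
  have h2 : (0:ℝ) < t^2 := by positivity
  have hd : (0:ℝ) < 1+2*t^2 := by positivity
  set c : ℝ := 1/(1+2*t^2) with hc
  have hc0 : 0 < c := by positivity
  have hc1 : c < 1 := by rw [hc, div_lt_one hd]; nlinarith
  -- facts for x ∈ Ioo 0 c
  have hyp : ∀ x ∈ Set.Ioo (0:ℝ) c, 0 < 1 - (1+t^2)*x := by
    intro x hx
    have h1 : x < c := hx.2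
    rw [hc, lt_div_iff₀ hd] at h1
    nlinarith [hx.1]
  have h1xp : ∀ x ∈ Set.Ioo (0:ℝ) c, 0 < 1 - x := fun x hx => by
    have := hx.2; linarith [hc1]
  -- image
  have himg : (fun x => t^2*x/(1-x)) '' Set.Ioo 0 c = Set.Ioo (0:ℝ) (1/2) := by
    ext y
    constructor
    · rintro ⟨x, hx, rfl⟩
      have h1x := h1xp x hx
      have hx0 := hx.1
      have hxc := hx.2
      constructor
      · positivity
      · rw [div_lt_iff₀ h1x]
        rw [hc, lt_div_iff₀ hd] at hxc
        nlinarith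
    · rintro ⟨hy0, hy1⟩
      refine ⟨y/(t^2+y), ⟨by positivity, ?_⟩, ?_⟩
      · rw [hc, div_lt_div_iff₀ (by positivity) hd]
        nlinarith
      · have hty : (0:ℝ) < t^2 + y := by positivity
        field_simp
        ring
  -- derivative
  have hder : ∀ x ∈ Set.Ioo (0:ℝ) c, HasDerivWithinAt (fun x => t^2*x/(1-x))
      (t^2/(1-x)^2) (Set.Ioo (0:ℝ) c) x := by
    intro x hx
    have h1x := (h1xp x hx).ne'
    have h := (((hasDerivAt_id x).const_mul (t^2)).div ((hasDerivAt_id x).const_sub 1) h1x)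
    simp only [id_eq] at h
    refine HasDerivAt.hasDerivWithinAt ?_
    exact h.congr_deriv (by ring)
  -- injectivity
  have hinj : Set.InjOn (fun x => t^2*x/(1-x)) (Set.Ioo (0:ℝ) c) := by
    intro a ha b hb hab
    have h1a := (h1xp a ha).ne'
    have h1b := (h1xp b hb).ne'
    field_simp at hab
    nlinarith [h2]
  rw [← himg, integral_image_eq_integral_abs_deriv_smul measurableSet_Ioo hder hinj,
    ← MeasureTheory.integral_const_mul]
  refine setIntegral_congr_fun measurableSet_Ioo (fun x hx => ?_)
  have hx0 := hx.1
  have h1x := h1xp x hx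
  have hy := hyp x hx
  have key := pt (e := e) s t x ht hx0 h1x hy
  rw [smul_eq_mul, abs_of_pos (by positivity)]
  rw [show t^2*x/(1-x) * (1 - t^2*x/(1-x)) = t^2*(x*(1-(1+t^2)*x))/(1-x)^2 from by
        field_simp; ring,
      show t^2 + t^2*x/(1-x) = t^2/(1-x) from by field_simp; ring]
  rw [← key]
lemma dom (s e : ℝ) (hs0 : 0 < s) (hs1 : -1 < s - 1/2) (he : -1 < e) (he' : -(1:ℝ)/2 ≤ e) :
    Tendsto (fun t : ℝ => ∫ x in Set.Ioo (0:ℝ) 1,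
        Set.indicator (Set.Ioo (0:ℝ) (1/(1+2*t^2)))
          (fun x => x ^ e * (1-(1+t^2)*x) ^ e * (1-x) ^ (s-1/2-e)) x)
      (nhdsWithin 0 (Set.Ioi 0))
      (nhds (∫ x in Set.Ioo (0:ℝ) 1, x ^ e * (1-x) ^ (s-1/2))) := by
  have key : ∀ t : ℝ, 0 < t → ∀ x ∈ Set.Ioo (0:ℝ) (1/(1+2*t^2)),
      (1-(1+t^2)*x) ^ e ≤ 2 * (1-x) ^ e ∧ 0 < 1 - (1+t^2)*x ∧ 0 < 1 - x := by
    intro t ht x hx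
    have hd : (0:ℝ) < 1+2*t^2 := by positivity
    have hxc : (1+2*t^2)*x < 1 := by
      have := hx.2; rw [lt_div_iff₀ hd] at this; linarith
    have hx0 := hx.1
    have hy0 : 0 < 1 - (1+t^2)*x := by nlinarith
    have h1x : 0 < 1 - x := by nlinarith
    refine ⟨?_, hy0, h1x⟩
    rcases le_or_gt 0 e with h|h
    · calc (1-(1+t^2)*x) ^ e ≤ (1-x) ^ e :=
            Real.rpow_le_rpow hy0.le (by nlinarith) h
        _ ≤ 2 * (1-x) ^ e := by nlinarith [Real.rpow_nonneg h1x.le e]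
    · have h1 : (1-x)/2 ≤ 1-(1+t^2)*x := by nlinarith
      have h2 : (1-(1+t^2)*x) ^ e ≤ ((1-x)/2) ^ e :=
        Real.rpow_le_rpow_of_nonpos (by positivity) h1 h.le
      have h3 : ((1-x)/2) ^ e = (1-x) ^ e * ((2:ℝ) ^ e)⁻¹ := by
        rw [Real.div_rpow h1x.le (by norm_num), div_eq_mul_inv]
      have h4 : ((2:ℝ) ^ e)⁻¹ = (2:ℝ) ^ (-e) := (Real.rpow_neg (by norm_num) e).symm
      have h5 : (2:ℝ) ^ (-e) ≤ 2 := by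
        calc (2:ℝ) ^ (-e) ≤ (2:ℝ) ^ (1:ℝ) :=
              Real.rpow_le_rpow_of_exponent_le one_le_two (by linarith)
          _ = 2 := Real.rpow_one 2
      have h6 : (0:ℝ) ≤ (1-x) ^ e := Real.rpow_nonneg h1x.le e
      nlinarith [h2, h3, h4, h5, h6]
  have hmeasF : ∀ t : ℝ, AEStronglyMeasurable
      (Set.indicator (Set.Ioo (0:ℝ) (1/(1+2*t^2)))
        (fun x => x ^ e * (1-(1+t^2)*x) ^ e * (1-x) ^ (s-1/2-e)))
      (volume.restrict (Set.Ioo (0:ℝ) 1)) := by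
    intro t
    apply AEStronglyMeasurable.indicator _ measurableSet_Ioo
    apply Measurable.aestronglyMeasurable
    fun_prop
  refine tendsto_integral_filter_of_dominated_convergence
    (fun x => 2 * (x ^ e * (1-x) ^ (s-1/2)))
    (Eventually.of_forall hmeasF) ?_ ?_ ?_
  · filter_upwards [self_mem_nhdsWithin] with t (ht : t ∈ Set.Ioi 0)
    filter_upwards [ae_restrict_mem measurableSet_Ioo] with x hx
    have hx0 := hx.1
    have h1x : 0 < 1 - x := by linarith [hx.2]
    by_cases hxc : x ∈ Set.Ioo (0:ℝ) (1/(1+2*t^2))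
    · rw [Set.indicator_of_mem hxc]
      obtain ⟨hb, hy0, _⟩ := key t ht x hxc
      have h1 : 0 ≤ x ^ e := Real.rpow_nonneg hx0.le e
      have h2 : 0 ≤ (1-(1+t^2)*x) ^ e := Real.rpow_nonneg hy0.le e
      have h3 : 0 ≤ (1-x) ^ (s-1/2-e) := Real.rpow_nonneg h1x.le _
      rw [Real.norm_of_nonneg (by positivity)]
      have h4 : (1-x) ^ e * (1-x) ^ (s-1/2-e) = (1-x) ^ (s-1/2) := by
        rw [← Real.rpow_add h1x]; ring_nf
      calc x ^ e * (1-(1+t^2)*x) ^ e * (1-x) ^ (s-1/2-e)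
          ≤ x ^ e * (2 * (1-x) ^ e) * (1-x) ^ (s-1/2-e) := by
            apply mul_le_mul_of_nonneg_right _ h3
            exact mul_le_mul_of_nonneg_left hb h1
        _ = 2 * (x ^ e * ((1-x) ^ e * (1-x) ^ (s-1/2-e))) := by ring
        _ = 2 * (x ^ e * (1-x) ^ (s-1/2)) := by rw [h4]
    · rw [Set.indicator_of_notMem hxc]
      simp only [norm_zero]
      have h1 : 0 ≤ x ^ e := Real.rpow_nonneg hx0.le e
      have h3 : 0 ≤ (1-x) ^ (s-1/2) := Real.rpow_nonneg h1x.le _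
      positivity
  · exact (integrableOn_betaIoo he hs1).const_mul 2
  · filter_upwards [ae_restrict_mem measurableSet_Ioo] with x hx
    have hx0 := hx.1
    have h1x : 0 < 1 - x := by linarith [hx.2]
    have hev : ∀ᶠ t : ℝ in nhdsWithin 0 (Set.Ioi 0),
        Set.indicator (Set.Ioo (0:ℝ) (1/(1+2*t^2)))
          (fun x => x ^ e * (1-(1+t^2)*x) ^ e * (1-x) ^ (s-1/2-e)) x
          = x ^ e * (1-(1+t^2)*x) ^ e * (1-x) ^ (s-1/2-e) := by
      have hcont : Tendsto (fun t : ℝ => (1+2*t^2)*x) (nhdsWithin 0 (Set.Ioi 0))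
          (nhds x) := by
        have : Tendsto (fun t : ℝ => (1+2*t^2)*x) (nhds 0) (nhds ((1+2*0^2)*x)) := by
          apply Continuous.tendsto; fun_prop
        simpa using this.mono_left nhdsWithin_le_nhds
      have h2 : ∀ᶠ t : ℝ in nhdsWithin 0 (Set.Ioi 0), (1+2*t^2)*x < 1 :=
        hcont.eventually_lt_const hx.2
      filter_upwards [h2] with t ht2
      apply Set.indicator_of_mem
      have hd : (0:ℝ) < 1+2*t^2 := by positivity
      exact ⟨hx0, by rw [lt_div_iff₀ hd] at *; linarith⟩
    rw [show x ^ e * (1-x) ^ (s-1/2) = x ^ e * (1-x) ^ e * (1-x) ^ (s-1/2-e) from by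
      rw [mul_assoc, ← Real.rpow_add h1x]; ring_nf]
    apply Tendsto.congr' (hev.mono fun t ht => ht.symm)
    have hy : Tendsto (fun t : ℝ => (1-(1+t^2)*x) ^ e) (nhdsWithin 0 (Set.Ioi 0))
        (nhds ((1-x) ^ e)) := by
      have h1 : Tendsto (fun t : ℝ => 1-(1+t^2)*x) (nhds 0) (nhds (1-(1+0^2)*x)) := by
        apply Continuous.tendsto; fun_prop
      have h2 : Tendsto (fun t : ℝ => 1-(1+t^2)*x) (nhdsWithin 0 (Set.Ioi 0))
          (nhds (1-x)) := by simpa using h1.mono_left nhdsWithin_le_nhds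
      exact h2.rpow_const (Or.inl h1x.ne')
    have := (hy.const_mul (x ^ e)).mul_const ((1-x) ^ (s-1/2-e))
    simpa [mul_comm, mul_assoc, mul_left_comm] using this
-- integrability of the original integrand
lemma hint (e p t : ℝ) (he : -1 < e) (hp : 0 < p) (ht : 0 < t) :
    IntegrableOn (fun h : ℝ => (h*(1-h)) ^ e / (t^2+h) ^ p) (Set.Ioo (0:ℝ) 1) := by
  have h2 : (0:ℝ) < t^2 := by positivity
  apply Integrable.mono' (((integrableOn_betaIoo he he).const_mul (((t^2) ^ p)⁻¹)))
  · apply Measurable.aestronglyMeasurable; fun_prop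
  · filter_upwards [ae_restrict_mem measurableSet_Ioo] with x hx
    have hx0 := hx.1
    have h1x : 0 < 1 - x := by linarith [hx.2]
    have hb : (0:ℝ) < t^2 + x := by positivity
    rw [Real.norm_of_nonneg (by positivity)]
    rw [div_eq_mul_inv, Real.mul_rpow hx0.le h1x.le, mul_comm (((t^2) ^ p)⁻¹)]
    apply mul_le_mul_of_nonneg_left _ (by positivity)
    apply inv_anti₀ (by positivity)
    exact Real.rpow_le_rpow h2.le (by linarith) hp.le

lemma tail (s e p : ℝ) (hs0 : 0 < s) (he : -1 < e) (hp : 0 < p) :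
    Tendsto (fun t : ℝ => t ^ (1+2*s) * ∫ h in Set.Ico (1/2:ℝ) 1, (h*(1-h)) ^ e / (t^2+h) ^ p)
      (nhdsWithin 0 (Set.Ioi 0)) (nhds 0) := by
  set M : ℝ := ∫ h in Set.Ico (1/2:ℝ) 1, (2:ℝ) ^ p * (h*(1-h)) ^ e with hM
  have hsub : Set.Ico (1/2:ℝ) 1 ⊆ Set.Ioo (0:ℝ) 1 := fun x hx =>
    ⟨by linarith [hx.1], hx.2⟩
  have hbdint : IntegrableOn (fun h : ℝ => (2:ℝ) ^ p * (h*(1-h)) ^ e) (Set.Ico (1/2:ℝ) 1) := by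
    apply IntegrableOn.mono_set _ hsub
    apply Integrable.congr ((integrableOn_betaIoo he he).const_mul ((2:ℝ) ^ p))
    filter_upwards [ae_restrict_mem measurableSet_Ioo] with x hx
    rw [Real.mul_rpow hx.1.le (by linarith [hx.2])]
  have hb : ∀ t : ℝ, 0 < t →
      (∫ h in Set.Ico (1/2:ℝ) 1, (h*(1-h)) ^ e / (t^2+h) ^ p) ≤ M := by
    intro t ht
    apply setIntegral_mono_on ((hint e p t he hp ht).mono_set hsub) hbdint measurableSet_Ico
    intro x hx
    have hx0 : (0:ℝ) < x := by linarith [hx.1]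
    have h1x : (0:ℝ) ≤ 1 - x := by linarith [hx.2]
    have hbp : (0:ℝ) < t^2 + x := by positivity
    rw [div_le_iff₀ (by positivity)]
    have h1 : (1:ℝ) ≤ (2:ℝ) ^ p * (t^2+x) ^ p := by
      rw [← Real.mul_rpow (by norm_num) hbp.le]
      calc (1:ℝ) = 1 ^ p := (Real.one_rpow p).symm
        _ ≤ (2*(t^2+x)) ^ p := Real.rpow_le_rpow (by norm_num) (by nlinarith [hx.1]) hp.le
    nlinarith [Real.rpow_nonneg (mul_nonneg hx0.le h1x) e]
  have hnn : ∀ t : ℝ, 0 < t →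
      0 ≤ ∫ h in Set.Ico (1/2:ℝ) 1, (h*(1-h)) ^ e / (t^2+h) ^ p := by
    intro t ht
    apply setIntegral_nonneg measurableSet_Ico
    intro x hx
    have hx0 : (0:ℝ) < x := by linarith [hx.1]
    have h1x : (0:ℝ) ≤ 1 - x := by linarith [hx.2]
    have : (0:ℝ) < t^2 + x := by positivity
    positivity
  have htend : Tendsto (fun t : ℝ => t ^ (1+2*s) * M) (nhdsWithin 0 (Set.Ioi 0)) (nhds 0) := by
    have h1 : Tendsto (fun t : ℝ => t ^ (1+2*s)) (nhdsWithin 0 (Set.Ioi 0)) (nhds 0) := by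
      have hc : ContinuousAt (fun t : ℝ => t ^ (1+2*s)) 0 :=
        Real.continuousAt_rpow_const 0 (1+2*s) (Or.inr (by linarith))
      have := hc.tendsto.mono_left (nhdsWithin_le_nhds (s := Set.Ioi (0:ℝ)))
      simpa [Real.zero_rpow (show (1+2*s) ≠ 0 by linarith)] using this
    simpa using h1.mul_const M
  apply squeeze_zero' ?_ ?_ htend
  · filter_upwards [self_mem_nhdsWithin] with t (ht : t ∈ Set.Ioi 0)
    have := hnn t ht
    have h0 : (0:ℝ) ≤ t ^ (1+2*s) := Real.rpow_nonneg (le_of_lt ht) _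
    positivity
  · filter_upwards [self_mem_nhdsWithin] with t (ht : t ∈ Set.Ioi 0)
    exact mul_le_mul_of_nonneg_left (hb t ht) (Real.rpow_nonneg (le_of_lt ht) _)
theorem stmt1 (N : ℕ) (hN : 2 ≤ N) (s : ℝ) (hs : s ∈ Set.Ioo (0:ℝ) 1) :
    Tendsto
      (fun t : ℝ => t ^ (1 + 2*s) *
        ∫ h in Set.Ioo (0:ℝ) 1,
          (h*(1-h)) ^ (((N:ℝ)-3)/2) / (t^2 + h) ^ (((N:ℝ)+2*s)/2))
      (nhdsWithin 0 (Set.Ioi 0))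
      (nhds (Real.Gamma (1/2+s) * Real.Gamma (((N:ℝ)-1)/2) /
        Real.Gamma (((N:ℝ)+2*s)/2))) := by
  obtain ⟨hs0, hs2⟩ := hs
  have hN2 : (2:ℝ) ≤ (N:ℝ) := by exact_mod_cast hN
  set e : ℝ := ((N:ℝ)-3)/2 with hedef
  have he : -1 < e := by rw [hedef]; linarith
  have he' : -(1:ℝ)/2 ≤ e := by rw [hedef]; linarith
  have hps : ((N:ℝ)+2*s)/2 = e+s+3/2 := by rw [hedef]; ring
  have hp0 : (0:ℝ) < e+s+3/2 := by linarith
  simp only [hps]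
  -- the limit value
  have hval : ∫ x in Set.Ioo (0:ℝ) 1, x ^ e * (1-x) ^ (s-1/2)
      = Real.Gamma (1/2+s) * Real.Gamma (((N:ℝ)-1)/2) / Real.Gamma (e+s+3/2) := by
    have hb := betaIntegral_real (a := e+1) (b := s+1/2) (by linarith) (by linarith)
    simp only [show e+1-1 = e from by ring, show s+1/2-1 = s-1/2 from by ring] at hb
    rw [hb, show e+1 = ((N:ℝ)-1)/2 from by rw [hedef]; ring]
    rw [show ((N:ℝ)-1)/2+(s+1/2) = e+s+3/2 from by rw [hedef]; ring]
    rw [show s+1/2 = 1/2+s from by ring]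
    ring
  rw [← hval]
  -- decompose and conclude
  have hA := dom s e hs0 (by linarith) he he'
  have hB := tail s e (e+s+3/2) hs0 he hp0
  have hfinal := hA.add hB
  rw [add_zero] at hfinal
  apply Tendsto.congr' _ hfinal
  filter_upwards [self_mem_nhdsWithin] with t (ht : t ∈ Set.Ioi 0)
  have ht0 : (0:ℝ) < t := ht
  have hsplit : (∫ h in Set.Ioo (0:ℝ) 1, (h*(1-h)) ^ e / (t^2+h) ^ (e+s+3/2))
      = (∫ h in Set.Ioo (0:ℝ) (1/2), (h*(1-h)) ^ e / (t^2+h) ^ (e+s+3/2))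
        + ∫ h in Set.Ico (1/2:ℝ) 1, (h*(1-h)) ^ e / (t^2+h) ^ (e+s+3/2) := by
    rw [← setIntegral_union (Set.disjoint_left.mpr
        (fun x hx hx2 => absurd hx2.1 (not_le.mpr hx.2))) measurableSet_Ico
      ((hint e (e+s+3/2) t he hp0 ht0).mono_set (by
        rw [← Set.Ioo_union_Ico_eq_Ioo (by norm_num : (0:ℝ) < 1/2) (by norm_num : (1/2:ℝ) ≤ 1)]
        exact Set.subset_union_left))
      ((hint e (e+s+3/2) t he hp0 ht0).mono_set (fun x hx => ⟨by linarith [hx.1], hx.2⟩)),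
      Set.Ioo_union_Ico_eq_Ioo (by norm_num : (0:ℝ) < 1/2) (by norm_num : (1/2:ℝ) ≤ 1)]
  have hcov := cov s e t ht0
  have hind : (∫ x in Set.Ioo (0:ℝ) (1/(1+2*t^2)),
        x ^ e * (1-(1+t^2)*x) ^ e * (1-x) ^ (s-1/2-e))
      = ∫ x in Set.Ioo (0:ℝ) 1, Set.indicator (Set.Ioo (0:ℝ) (1/(1+2*t^2)))
          (fun x => x ^ e * (1-(1+t^2)*x) ^ e * (1-x) ^ (s-1/2-e)) x := by
    have hd : (0:ℝ) < 1+2*t^2 := by positivity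
    have hset : Set.Ioo (0:ℝ) 1 ∩ Set.Ioo (0:ℝ) (1/(1+2*t^2))
        = Set.Ioo (0:ℝ) (1/(1+2*t^2)) := by
      apply Set.inter_eq_self_of_subset_right
      intro x hx
      exact ⟨hx.1, lt_of_lt_of_le hx.2 (by rw [div_le_one hd]; nlinarith)⟩
    rw [setIntegral_indicator measurableSet_Ioo, hset]
  show (∫ x in Set.Ioo (0:ℝ) 1, Set.indicator (Set.Ioo (0:ℝ) (1/(1+2*t^2)))
          (fun x => x ^ e * (1-(1+t^2)*x) ^ e * (1-x) ^ (s-1/2-e)) x)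
        + t ^ (1+2*s) * (∫ h in Set.Ico (1/2:ℝ) 1, (h*(1-h)) ^ e / (t^2+h) ^ (e+s+3/2))
      = t ^ (1+2*s) * ∫ h in Set.Ioo (0:ℝ) 1, (h*(1-h)) ^ e / (t^2+h) ^ (e+s+3/2)
  rw [← hind, ← hcov, hsplit]
  ring
end

section
/- Let N ≥ 2 and s ∈ (0,1). For every t ∈ (0,1], the value ψ(t) = t^(1+2s) ∫_0^1 (h(1-h))^((N-3)/2)/(t²+h)^((N+2s)/2) dh satisfies ψ(t) ≤ √π Γ((N-1)/2)/Γ(N/2). -/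
open MeasureTheory Real

lemma realBeta (a b : ℝ) (ha : 0 < a) (hb : 0 < b) :
    ∫ x in Set.Ioo (0:ℝ) 1, x ^ (a-1) * (1-x) ^ (b-1)
      = Real.Gamma a * Real.Gamma b / Real.Gamma (a+b) := by
  have key := Complex.Gamma_mul_Gamma_eq_betaIntegral (s := (a:ℂ)) (t := (b:ℂ))
    (by simpa using ha) (by simpa using hb)
  have hint : Complex.betaIntegral (a:ℂ) (b:ℂ)
      = ((∫ x in Set.Ioo (0:ℝ) 1, x ^ (a-1) * (1-x) ^ (b-1) : ℝ) : ℂ) := by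
    rw [Complex.betaIntegral, intervalIntegral.integral_of_le zero_le_one,
      MeasureTheory.integral_Ioc_eq_integral_Ioo]
    have : ∀ x ∈ Set.Ioo (0:ℝ) 1, (x:ℂ) ^ ((a:ℂ)-1) * (1-(x:ℂ)) ^ ((b:ℂ)-1)
        = ((x ^ (a-1) * (1-x) ^ (b-1) : ℝ) : ℂ) := by
      intro x hx
      obtain ⟨hx0, hx1⟩ := hx
      rw [Complex.ofReal_mul, Complex.ofReal_cpow hx0.le, Complex.ofReal_cpow (by linarith)]
      push_cast
      ring
    rw [setIntegral_congr_fun measurableSet_Ioo this]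
    exact integral_ofReal
  have hne : Real.Gamma (a+b) ≠ 0 := (Real.Gamma_pos_of_pos (by linarith)).ne'
  rw [hint, ← Complex.ofReal_add, Complex.Gamma_ofReal, Complex.Gamma_ofReal,
    Complex.Gamma_ofReal, ← Complex.ofReal_mul] at key
  field_simp
  rw [mul_comm]
  exact_mod_cast key.symm

lemma betaIntegrable (a b : ℝ) (ha : 0 < a) (hb : 0 < b) :
    IntegrableOn (fun x : ℝ => x ^ (a-1) * (1-x) ^ (b-1)) (Set.Ioo (0:ℝ) 1) := by
  have h := Complex.betaIntegral_convergent (u := (a:ℂ)) (v := (b:ℂ))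
    (by simpa using ha) (by simpa using hb)
  rw [intervalIntegrable_iff_integrableOn_Ioc_of_le zero_le_one] at h
  have h2 : IntegrableOn (fun x : ℝ =>
      Complex.re ((x:ℂ) ^ ((a:ℂ)-1) * (1-(x:ℂ)) ^ ((b:ℂ)-1))) (Set.Ioo (0:ℝ) 1) :=
    (h.mono_set Set.Ioo_subset_Ioc_self).re
  refine h2.congr_fun (fun x hx => ?_) measurableSet_Ioo
  obtain ⟨hx0, hx1⟩ := hx
  have : (x:ℂ) ^ ((a:ℂ)-1) * (1-(x:ℂ)) ^ ((b:ℂ)-1)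
      = ((x ^ (a-1) * (1-x) ^ (b-1) : ℝ) : ℂ) := by
    rw [Complex.ofReal_mul, Complex.ofReal_cpow hx0.le,
      Complex.ofReal_cpow (by linarith : (0:ℝ) ≤ 1 - x)]
    push_cast
    ring
  beta_reduce
  rw [this, Complex.ofReal_re]

-- core algebraic identity, proved via logarithms
lemma alg_key {t u : ℝ} (ht : 0 < t) (hu : 0 < u) (h1u : 0 < 1-u)
    (hcu : 0 < 1-(1+t^2)*u) (s α q : ℝ) (hq : q = α + 3/2 + s) :
    t ^ (1+2*s) * (t^2/(1-u)^2 *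
      (((t^2*u*(1-(1+t^2)*u))/(1-u)^2) ^ α / (t^2/(1-u)) ^ q))
    = u ^ α * (1-(1+t^2)*u) ^ α * (1-u) ^ (s-α-1/2) := by
  have hP : (0:ℝ) < (t^2*u*(1-(1+t^2)*u))/(1-u)^2 := by positivity
  have hQ : (0:ℝ) < t^2/(1-u) := by positivity
  have lp : Real.log ((t^2*u*(1-(1+t^2)*u))/(1-u)^2)
      = 2*Real.log t + Real.log u + Real.log (1-(1+t^2)*u) - 2*Real.log (1-u) := by
    rw [Real.log_div (by positivity) (by positivity),
      Real.log_mul (by positivity) hcu.ne', Real.log_mul (by positivity) hu.ne',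
      Real.log_pow, Real.log_pow]
    push_cast; ring
  have lq : Real.log (t^2/(1-u)) = 2*Real.log t - Real.log (1-u) := by
    rw [Real.log_div (by positivity) h1u.ne', Real.log_pow]
    push_cast; ring
  have e3 : t^2/(1-u)^2 = Real.exp (2*Real.log t - 2*Real.log (1-u)) := by
    rw [Real.exp_sub,
      show (2:ℝ)*Real.log t = Real.log (t^2) by rw [Real.log_pow]; push_cast; ring,
      show (2:ℝ)*Real.log (1-u) = Real.log ((1-u)^2) by rw [Real.log_pow]; push_cast; ring,
      Real.exp_log (by positivity), Real.exp_log (by positivity)]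
  rw [Real.rpow_def_of_pos ht, Real.rpow_def_of_pos hP, Real.rpow_def_of_pos hQ,
    Real.rpow_def_of_pos hu, Real.rpow_def_of_pos hcu, Real.rpow_def_of_pos h1u,
    lp, lq, e3, ← Real.exp_sub, ← Real.exp_add, ← Real.exp_add, ← Real.exp_add,
    ← Real.exp_add, Real.exp_eq_exp]
  subst hq; ring

set_option maxHeartbeats 2000000 in
theorem stmt3 (N : ℕ) (hN : 2 ≤ N) (s : ℝ) (hs : s ∈ Set.Ioo (0:ℝ) 1) :
    ∀ t ∈ Set.Ioc (0:ℝ) 1,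
      t ^ (1 + 2*s) *
        (∫ h in Set.Ioo (0:ℝ) 1,
          (h*(1-h)) ^ (((N:ℝ)-3)/2) / (t^2 + h) ^ (((N:ℝ)+2*s)/2)) ≤
      Real.sqrt π * Real.Gamma (((N:ℝ)-1)/2) / Real.Gamma ((N:ℝ)/2) := by
  obtain ⟨hs0, hs1⟩ := hs
  rintro t ⟨ht0, ht1⟩
  have hN2 : (2:ℝ) ≤ (N:ℝ) := by exact_mod_cast hN
  set α : ℝ := ((N:ℝ)-3)/2 with hα
  set q : ℝ := ((N:ℝ)+2*s)/2 with hqdef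
  have hq : q = α + 3/2 + s := by rw [hα, hqdef]; ring
  have hα2 : (0:ℝ) ≤ α + 1/2 := by rw [hα]; linarith
  set c : ℝ := 1 + t^2 with hc
  clear_value α q c
  have hc1 : (1:ℝ) ≤ c := by nlinarith
  have hc0 : (0:ℝ) < c := by linarith
  have hs₁meas : MeasurableSet (Set.Ioo (0:ℝ) (1/c)) := measurableSet_Ioo
  -- Beta value
  have hB : ∫ x in Set.Ioo (0:ℝ) 1, x ^ α * (1-x) ^ (-(1/2):ℝ)
      = Real.sqrt π * Real.Gamma (((N:ℝ)-1)/2) / Real.Gamma ((N:ℝ)/2) := by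
    have := realBeta (((N:ℝ)-1)/2) (1/2) (by linarith) (by norm_num)
    rw [show ((N:ℝ)-1)/2 - 1 = α by rw [hα]; ring,
      show (1:ℝ)/2 - 1 = -(1/2) by norm_num,
      show ((N:ℝ)-1)/2 + 1/2 = (N:ℝ)/2 by ring, Real.Gamma_one_half_eq] at this
    rw [this]; ring
  have hBnonneg : 0 ≤ ∫ x in Set.Ioo (0:ℝ) 1, x ^ α * (1-x) ^ (-(1/2):ℝ) :=
    setIntegral_nonneg measurableSet_Ioo (fun x hx => mul_nonneg
      (Real.rpow_nonneg hx.1.le _) (Real.rpow_nonneg (by linarith [hx.2]) _))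
  have hBint : IntegrableOn (fun x : ℝ => x ^ α * (1-x) ^ (-(1/2):ℝ)) (Set.Ioo (0:ℝ) 1) := by
    have := betaIntegrable (((N:ℝ)-1)/2) (1/2) (by linarith) (by norm_num)
    rw [show ((N:ℝ)-1)/2 - 1 = α by rw [hα]; ring,
      show (1:ℝ)/2 - 1 = -(1/2) by norm_num] at this
    exact this
  -- first change of variables: h = t^2*u/(1-u)
  have himg : (fun u : ℝ => t^2*u/(1-u)) '' Set.Ioo (0:ℝ) (1/c) = Set.Ioo (0:ℝ) 1 := by
    ext h
    constructor
    · rintro ⟨u, ⟨hu0, hu1⟩, rfl⟩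
      have h1u : 0 < 1 - u := by
        have : u < 1 := lt_of_lt_of_le hu1 (by rw [div_le_one hc0]; exact hc1)
        linarith
      have hcu : c * u < 1 := by rwa [← lt_div_iff₀' hc0]
      refine ⟨div_pos (by positivity) h1u, ?_⟩
      rw [div_lt_one h1u]; nlinarith
    · rintro ⟨hh0, hh1⟩
      refine ⟨h/(t^2+h), ⟨by positivity, ?_⟩, ?_⟩
      · rw [div_lt_div_iff₀ (by positivity) hc0, hc]
        nlinarith [mul_pos (pow_pos ht0 2) (sub_pos.mpr hh1)]
      · have ht2h : (0:ℝ) < t^2 + h := by positivity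
        field_simp
        ring
  have hderiv : ∀ u ∈ Set.Ioo (0:ℝ) (1/c),
      HasDerivWithinAt (fun u : ℝ => t^2*u/(1-u)) (t^2/(1-u)^2) (Set.Ioo (0:ℝ) (1/c)) u := by
    intro u ⟨hu0, hu1⟩
    have h1u : 0 < 1 - u := by
      have : u < 1 := lt_of_lt_of_le hu1 (by rw [div_le_one hc0]; exact hc1)
      linarith
    have H := (((hasDerivAt_id u).const_mul (t^2)).div
        ((hasDerivAt_id u).const_sub 1) h1u.ne')
    simp only [id_eq] at H
    have := H.hasDerivWithinAt (s := Set.Ioo (0:ℝ) (1/c))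
    refine this.congr_deriv ?_
    field_simp
    ring
  have hinj : Set.InjOn (fun u : ℝ => t^2*u/(1-u)) (Set.Ioo (0:ℝ) (1/c)) := by
    rintro u1 ⟨h10, h11⟩ u2 ⟨h20, h21⟩ he
    have h1 : u1 < 1 := lt_of_lt_of_le h11 (by rw [div_le_one hc0]; exact hc1)
    have h2 : u2 < 1 := lt_of_lt_of_le h21 (by rw [div_le_one hc0]; exact hc1)
    have ht2 : (0:ℝ) < t^2 := by positivity
    simp only at he
    rw [div_eq_div_iff (by linarith) (by linarith)] at he
    nlinarith
  have step1 : (∫ h in Set.Ioo (0:ℝ) 1,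
      (h*(1-h)) ^ α / (t^2 + h) ^ q)
      = ∫ u in Set.Ioo (0:ℝ) (1/c), |t^2/(1-u)^2| •
        ((t^2*u/(1-u)*(1-t^2*u/(1-u))) ^ α / (t^2 + t^2*u/(1-u)) ^ q) := by
    rw [← himg]
    exact integral_image_eq_integral_abs_deriv_smul hs₁meas hderiv hinj _
  -- second change of variables: x = v/c on Ioo 0 1, image Ioo 0 (1/c)
  have himg2 : (fun v : ℝ => v/c) '' Set.Ioo (0:ℝ) 1 = Set.Ioo (0:ℝ) (1/c) := by
    ext x
    constructor
    · rintro ⟨v, ⟨hv0, hv1⟩, rfl⟩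
      exact ⟨by positivity, by rw [div_lt_div_iff₀ hc0 hc0]; nlinarith⟩
    · rintro ⟨hx0, hx1⟩
      exact ⟨c*x, ⟨mul_pos hc0 hx0, by rwa [← lt_div_iff₀' hc0]⟩,
        mul_div_cancel_left₀ _ hc0.ne'⟩
  have hderiv2 : ∀ v ∈ Set.Ioo (0:ℝ) 1,
      HasDerivWithinAt (fun v : ℝ => v/c) (1/c) (Set.Ioo (0:ℝ) 1) v :=
    fun v _ => ((hasDerivAt_id v).div_const c).hasDerivWithinAt
  have hinj2 : Set.InjOn (fun v : ℝ => v/c) (Set.Ioo (0:ℝ) 1) := by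
    intro v1 _ v2 _ he
    simp only at he
    field_simp at he
    exact he
  have step3 : (∫ u in Set.Ioo (0:ℝ) (1/c), u ^ α * (1-c*u) ^ (-(1/2):ℝ))
      = (c ^ (α+1))⁻¹ * ∫ x in Set.Ioo (0:ℝ) 1, x ^ α * (1-x) ^ (-(1/2):ℝ) := by
    rw [← himg2, integral_image_eq_integral_abs_deriv_smul measurableSet_Ioo hderiv2 hinj2,
      ← MeasureTheory.integral_const_mul]
    refine setIntegral_congr_fun measurableSet_Ioo (fun v hv => ?_)
    obtain ⟨hv0, hv1⟩ := hv
    have h1 : 1 - c*(v/c) = 1 - v := by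
      rw [← mul_div_assoc, mul_div_cancel_left₀ _ hc0.ne']
    rw [smul_eq_mul, abs_of_pos (one_div_pos.mpr hc0), h1,
      Real.div_rpow hv0.le hc0.le, Real.rpow_add hc0, Real.rpow_one]
    ring
  have hKint : IntegrableOn (fun u : ℝ => u ^ α * (1-c*u) ^ (-(1/2):ℝ))
      (Set.Ioo (0:ℝ) (1/c)) := by
    rw [← himg2]
    rw [MeasureTheory.integrableOn_image_iff_integrableOn_abs_deriv_smul
      measurableSet_Ioo hderiv2 hinj2]
    refine IntegrableOn.congr_fun (hBint.const_mul ((c ^ (α+1))⁻¹))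
      (fun v hv => ?_) measurableSet_Ioo
    obtain ⟨hv0, hv1⟩ := hv
    have h1 : 1 - c*(v/c) = 1 - v := by
      rw [← mul_div_assoc, mul_div_cancel_left₀ _ hc0.ne']
    simp only [smul_eq_mul]
    rw [abs_of_pos (one_div_pos.mpr hc0), h1,
      Real.div_rpow hv0.le hc0.le, Real.rpow_add hc0, Real.rpow_one]
    ring
  -- main chain
  rw [step1, ← MeasureTheory.integral_const_mul]
  have step2 : (∫ u in Set.Ioo (0:ℝ) (1/c), t ^ (1+2*s) * (|t^2/(1-u)^2| •
        ((t^2*u/(1-u)*(1-t^2*u/(1-u))) ^ α / (t^2 + t^2*u/(1-u)) ^ q)))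
      ≤ ∫ u in Set.Ioo (0:ℝ) (1/c), u ^ α * (1-c*u) ^ (-(1/2):ℝ) := by
    have hptwise : ∀ u ∈ Set.Ioo (0:ℝ) (1/c),
        t ^ (1+2*s) * (|t^2/(1-u)^2| •
          ((t^2*u/(1-u)*(1-t^2*u/(1-u))) ^ α / (t^2 + t^2*u/(1-u)) ^ q))
        = u ^ α * (1-c*u) ^ α * (1-u) ^ (s-α-1/2) := by
      rintro u ⟨hu0, hu1⟩
      have h1u : 0 < 1 - u := by
        have : u < 1 := lt_of_lt_of_le hu1 (by rw [div_le_one hc0]; exact hc1)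
        linarith
      have hcu : 0 < 1 - c*u := by
        have : c * u < 1 := by rwa [← lt_div_iff₀' hc0]
        linarith
      have e1 : t^2*u/(1-u)*(1-t^2*u/(1-u)) = (t^2*u*(1-(1+t^2)*u))/(1-u)^2 := by
        field_simp; ring
      have e2 : t^2 + t^2*u/(1-u) = t^2/(1-u) := by field_simp; ring
      rw [smul_eq_mul, abs_of_pos (div_pos (pow_pos ht0 2) (pow_pos h1u 2)), e1, e2,
        ← mul_assoc, ← mul_div_assoc]
      rw [hc] at hcu ⊢
      have := alg_key ht0 hu0 h1u hcu s α q hq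
      rw [← this]; ring
    refine integral_mono_of_nonneg ?_ hKint ?_
    · rw [Filter.EventuallyLE, ae_restrict_iff' hs₁meas]
      filter_upwards with u hu
      rw [hptwise u hu]
      have h1u : 0 < 1 - u := by
        have : u < 1 := lt_of_lt_of_le hu.2 (by rw [div_le_one hc0]; exact hc1)
        linarith
      have hcu : 0 < 1 - c*u := by
        have : c * u < 1 := by rw [← lt_div_iff₀' hc0]; exact hu.2
        linarith
      have hu0 := hu.1
      positivity
    · rw [Filter.EventuallyLE, ae_restrict_iff' hs₁meas]
      filter_upwards with u hu
      rw [hptwise u hu]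
      obtain ⟨hu0, hu1⟩ := hu
      have h1u : 0 < 1 - u := by
        have : u < 1 := lt_of_lt_of_le hu1 (by rw [div_le_one hc0]; exact hc1)
        linarith
      have hcu : 0 < 1 - c*u := by
        have : c * u < 1 := by rwa [← lt_div_iff₀' hc0]
        linarith
      have hsplit : (1-c*u) ^ α = (1-c*u) ^ (-(1/2):ℝ) * (1-c*u) ^ (α+1/2) := by
        rw [← Real.rpow_add hcu]; norm_num
      rw [hsplit]
      have h2 : (1-c*u) ^ (α+1/2) * (1-u) ^ (s-α-1/2) ≤ 1 := by
        calc (1-c*u) ^ (α+1/2) * (1-u) ^ (s-α-1/2)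
            ≤ (1-u) ^ (α+1/2) * (1-u) ^ (s-α-1/2) := by
              apply mul_le_mul_of_nonneg_right
              · apply Real.rpow_le_rpow hcu.le _ hα2
                nlinarith
              · positivity
          _ = (1-u) ^ s := by rw [← Real.rpow_add h1u]; ring_nf
          _ ≤ 1 := Real.rpow_le_one h1u.le (by linarith) hs0.le
      calc u ^ α * ((1-c*u) ^ (-(1/2):ℝ) * (1-c*u) ^ (α+1/2)) * (1-u) ^ (s-α-1/2)
          = u ^ α * (1-c*u) ^ (-(1/2):ℝ) * ((1-c*u) ^ (α+1/2) * (1-u) ^ (s-α-1/2)) := by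
            ring
        _ ≤ u ^ α * (1-c*u) ^ (-(1/2):ℝ) * 1 := by
            apply mul_le_mul_of_nonneg_left h2
            positivity
        _ = u ^ α * (1-c*u) ^ (-(1/2):ℝ) := by ring
  refine step2.trans ?_
  rw [step3]
  calc (c ^ (α+1))⁻¹ * ∫ x in Set.Ioo (0:ℝ) 1, x ^ α * (1-x) ^ (-(1/2):ℝ)
      ≤ 1 * ∫ x in Set.Ioo (0:ℝ) 1, x ^ α * (1-x) ^ (-(1/2):ℝ) := by
        apply mul_le_mul_of_nonneg_right _ hBnonneg
        rw [inv_le_one_iff₀]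
        right
        exact Real.one_le_rpow hc1 (by linarith)
    _ = _ := by rw [one_mul, hB]
end

section
/- Let N ≥ 2, s ∈ (0, 1/2). Define Ψ(T) = (1-T)^((N-1)/2) ∫_0^∞ h^((N-3)/2) / ((1+Th)^(N/2-1-s) (1+h)^((N+2s)/2)) dh for T ∈ [0, 1/2]. Then there exists a constant C > 0 depending only on N and s such that |Ψ(A) - Ψ(B)| ≤ C |A - B|^(2s) for all A, B ∈ [0, 1/2]. -/
open MeasureTheory Real Set
set_option maxHeartbeats 1000000

lemma aux_mvt {f f' : ℝ → ℝ} {a b C : ℝ} (hab : a ≤ b)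
    (hd : ∀ t ∈ Set.Icc a b, HasDerivAt f (f' t) t)
    (hC : ∀ t ∈ Set.Icc a b, |f' t| ≤ C) :
    |f b - f a| ≤ C * (b - a) := by
  have := norm_image_sub_le_of_norm_deriv_le_segment'
    (fun t ht => (hd t ht).hasDerivWithinAt)
    (fun t ht => hC t (Ico_subset_Icc_self ht)) b (right_mem_Icc.mpr hab)
  simpa [Real.norm_eq_abs] using this

lemma aux_integrable {a b : ℝ} (ha : -1 < a) (hab : a + b < -1) :
    IntegrableOn (fun h : ℝ => h ^ a * (1+h) ^ b) (Set.Ioi 0) := by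
  have hmeas : ∀ s : Set ℝ, s ⊆ Ioi 0 → MeasurableSet s →
      AEStronglyMeasurable (fun h : ℝ => h ^ a * (1+h) ^ b) (volume.restrict s) := by
    intro s hs hms
    apply ContinuousOn.aestronglyMeasurable _ hms
    apply ContinuousOn.mul
    · exact continuousOn_id.rpow_const fun x hx => Or.inl (ne_of_gt (hs hx))
    · exact (continuousOn_const.add continuousOn_id).rpow_const
        fun x hx => Or.inl (by have := hs hx; simp only [mem_Ioi] at this; show (1:ℝ) + x ≠ 0; positivity)
  have h1 : IntegrableOn (fun h : ℝ => h ^ a * (1+h) ^ b) (Ioc 0 1) := by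
    have hbase : IntegrableOn (fun h : ℝ => h ^ a) (Ioc (0:ℝ) 1) := by
      have := intervalIntegral.intervalIntegrable_rpow' (a := 0) (b := 1) ha
      rwa [intervalIntegrable_iff_integrableOn_Ioc_of_le zero_le_one] at this
    refine Integrable.mono (hbase.const_mul (max 1 ((2:ℝ) ^ b)))
      (hmeas _ Ioc_subset_Ioi_self measurableSet_Ioc) ?_
    filter_upwards [ae_restrict_mem measurableSet_Ioc] with x hx
    have hx0 : 0 < x := hx.1
    have hx1 : x ≤ 1 := hx.2
    have h1x : (1:ℝ) ≤ 1 + x := by linarith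
    have hb : (1+x) ^ b ≤ max 1 ((2:ℝ) ^ b) := by
      rcases le_or_gt 0 b with hb0 | hb0
      · exact le_max_of_le_right (Real.rpow_le_rpow (by linarith) (by linarith) hb0)
      · exact le_max_of_le_left (Real.rpow_le_one_of_one_le_of_nonpos h1x hb0.le)
    rw [Real.norm_eq_abs, Real.norm_eq_abs, abs_of_nonneg (by positivity),
      abs_of_nonneg (by positivity)]
    calc x ^ a * (1+x) ^ b ≤ x ^ a * max 1 ((2:ℝ) ^ b) := by
          apply mul_le_mul_of_nonneg_left hb (by positivity)
      _ = max 1 ((2:ℝ) ^ b) * x ^ a := by ring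
  have h2 : IntegrableOn (fun h : ℝ => h ^ a * (1+h) ^ b) (Ioi 1) := by
    have hbase : IntegrableOn (fun h : ℝ => h ^ (a+b)) (Ioi (1:ℝ)) :=
      integrableOn_Ioi_rpow_of_lt hab one_pos
    refine Integrable.mono (hbase.const_mul ((2:ℝ) ^ |b|))
      (hmeas _ (fun x hx => mem_Ioi.mpr (lt_trans one_pos (mem_Ioi.mp hx))) measurableSet_Ioi) ?_
    filter_upwards [ae_restrict_mem measurableSet_Ioi] with x hx
    simp only [mem_Ioi] at hx
    have hx0 : (0:ℝ) < x := lt_trans one_pos hx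
    have hb : (1+x) ^ b ≤ (2:ℝ) ^ |b| * x ^ b := by
      rcases le_or_gt 0 b with hb0 | hb0
      · rw [abs_of_nonneg hb0, ← Real.mul_rpow (by norm_num) hx0.le]
        exact Real.rpow_le_rpow (by linarith) (by linarith) hb0
      · calc (1+x) ^ b ≤ x ^ b := Real.rpow_le_rpow_of_nonpos hx0 (by linarith) hb0.le
          _ ≤ (2:ℝ) ^ |b| * x ^ b := by
              nlinarith [Real.one_le_rpow (by norm_num : (1:ℝ) ≤ 2) (abs_nonneg b),
                Real.rpow_nonneg hx0.le b]
    rw [Real.norm_eq_abs, Real.norm_eq_abs, abs_of_nonneg (by positivity),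
      abs_of_nonneg (by positivity)]
    calc x ^ a * (1+x) ^ b ≤ x ^ a * ((2:ℝ) ^ |b| * x ^ b) := by
          apply mul_le_mul_of_nonneg_left hb (by positivity)
      _ = (2:ℝ) ^ |b| * (x ^ a * x ^ b) := by ring
      _ = (2:ℝ) ^ |b| * x ^ (a+b) := by rw [← Real.rpow_add hx0]
  have : Ioc (0:ℝ) 1 ∪ Ioi 1 = Ioi 0 := Set.Ioc_union_Ioi_eq_Ioi zero_le_one
  rw [← this]
  exact h1.union h2

lemma aux_subadd {x y p : ℝ} (hx : 0 ≤ x) (hy : 0 ≤ y) (hp : 0 ≤ p) (hp1 : p ≤ 1) :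
    (x+y) ^ p ≤ x ^ p + y ^ p := by
  have h := NNReal.rpow_add_le_add_rpow x.toNNReal y.toNNReal hp hp1
  have h2 := NNReal.coe_le_coe.2 h
  push_cast [NNReal.coe_rpow] at h2
  rwa [Real.coe_toNNReal _ hx, Real.coe_toNNReal _ hy] at h2

-- Lipschitz bound for t ↦ (1+t*h)^(-q), q+1 ≥ 0
lemma aux_lip {q h a b : ℝ} (hq : -1 ≤ q) (hh : 0 < h)
    (ha : 0 ≤ a) (hb : 0 ≤ b) :
    |(1+a*h) ^ (-q) - (1+b*h) ^ (-q)| ≤ |q| * h * |a-b| := by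
  have key : ∀ x y : ℝ, 0 ≤ x → x ≤ y →
      |(1+y*h) ^ (-q) - (1+x*h) ^ (-q)| ≤ |q| * h * (y - x) := by
    intro x y hx hxy
    have hd : ∀ t ∈ Set.Icc x y, HasDerivAt (fun t : ℝ => (1+t*h) ^ (-q))
        ((-q) * (1+t*h) ^ (-q-1) * h) t := by
      intro t ht
      have h1 : (0:ℝ) < 1 + t*h := by nlinarith [ht.1]
      have hinner : HasDerivAt (fun t : ℝ => 1+t*h) h t := by
        simpa using (hasDerivAt_mul_const h).const_add 1
      exact (Real.hasDerivAt_rpow_const (p := -q) (Or.inl h1.ne')).comp t hinner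
    have hC : ∀ t ∈ Set.Icc x y, |(-q) * (1+t*h) ^ (-q-1) * h| ≤ |q| * h := by
      intro t ht
      have h1 : (1:ℝ) ≤ 1 + t*h := by nlinarith [ht.1]
      have h2 : (1+t*h) ^ (-q-1) ≤ 1 :=
        Real.rpow_le_one_of_one_le_of_nonpos h1 (by linarith)
      have h3 : (0:ℝ) ≤ (1+t*h) ^ (-q-1) := Real.rpow_nonneg (by linarith) _
      rw [abs_mul, abs_mul, abs_neg, abs_of_pos hh, abs_of_nonneg h3]
      nlinarith [mul_le_mul_of_nonneg_left h2 (abs_nonneg q), hh.le]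
    have := aux_mvt hxy hd hC
    calc |(1+y*h) ^ (-q) - (1+x*h) ^ (-q)| ≤ (|q| * h) * (y - x) := this
      _ = |q| * h * (y - x) := by ring
  rcases le_total a b with hab | hab
  · have h4 : |a - b| = b - a := by rw [abs_of_nonpos (by linarith)]; ring
    rw [h4, abs_sub_comm]
    exact key a b ha hab
  · have h4 : |a - b| = a - b := abs_of_nonneg (by linarith)
    rw [h4]
    exact key b a hb hab

-- (ii) bound  (1+T*h)^(-q) ≤ (1+h)^(1/2)
lemma aux_v_bound (N : ℕ) (hN : 2 ≤ N) {s T h : ℝ} (hs0 : 0 < s) (hs1 : s < 1/2)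
    (hT : T ∈ Set.Icc (0:ℝ) (1/2)) (hh : 0 < h) :
    (1+T*h) ^ (-((N:ℝ)/2-1-s)) ≤ (1+h) ^ ((1:ℝ)/2) := by
  set q : ℝ := (N:ℝ)/2-1-s with hqdef
  have hTh : (0:ℝ) ≤ T*h := mul_nonneg hT.1 hh.le
  have h1 : (1:ℝ) ≤ 1 + T*h := by linarith
  have h1h : (1:ℝ) ≤ 1 + h := by linarith
  rcases le_or_gt 0 q with hq | hq
  · calc (1+T*h) ^ (-q) ≤ 1 := Real.rpow_le_one_of_one_le_of_nonpos h1 (by linarith)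
      _ ≤ (1+h) ^ ((1:ℝ)/2) := Real.one_le_rpow h1h (by norm_num)
  · have hnq : 0 < -q := by linarith
    have hle : T*h ≤ h := by nlinarith [hT.2]
    calc (1+T*h) ^ (-q) ≤ (1+h) ^ (-q) :=
          Real.rpow_le_rpow (by linarith) (by linarith) hnq.le
      _ ≤ (1+h) ^ ((1:ℝ)/2) := by
          apply Real.rpow_le_rpow_of_exponent_le h1h
          have hN2 : (2:ℝ) ≤ (N:ℝ) := by exact_mod_cast hN
          simp only [hqdef]; linarith

-- key Hölder bound for the difference of (1+t*h)^(-q)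
lemma aux_u_diff (N : ℕ) (hN : 2 ≤ N) {s a b h : ℝ} (hs0 : 0 < s) (hs1 : s < 1/2)
    (ha : a ∈ Set.Icc (0:ℝ) (1/2)) (hb : b ∈ Set.Icc (0:ℝ) (1/2)) (hh : 0 < h) :
    |(1+a*h) ^ (-((N:ℝ)/2-1-s)) - (1+b*h) ^ (-((N:ℝ)/2-1-s))| ≤
      2*(N:ℝ) * (|a - b| * h) ^ (2*s) := by
  set q : ℝ := (N:ℝ)/2-1-s with hqdef
  have hN2 : (2:ℝ) ≤ (N:ℝ) := by exact_mod_cast hN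
  have hq1 : (-1:ℝ) ≤ q := by simp only [hqdef]; linarith
  have hlip : |(1+a*h) ^ (-q) - (1+b*h) ^ (-q)| ≤ |q| * h * |a-b| :=
    aux_lip hq1 hh ha.1 hb.1
  set δ : ℝ := |a-b| with hδdef
  have hδ0 : 0 ≤ δ := abs_nonneg _
  have hx0 : 0 ≤ δ * h := mul_nonneg hδ0 hh.le
  rcases le_or_gt 0 q with hq | hq
  · -- q ≥ 0 : interpolate min(|q|δh, 2) ≤ 2 N (δh)^(2s)
    have hb2 : |(1+a*h) ^ (-q) - (1+b*h) ^ (-q)| ≤ 2 := by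
      have u1 : (1+a*h) ^ (-q) ≤ 1 := Real.rpow_le_one_of_one_le_of_nonpos
        (by nlinarith [ha.1]) (by linarith)
      have u2 : (1+b*h) ^ (-q) ≤ 1 := Real.rpow_le_one_of_one_le_of_nonpos
        (by nlinarith [hb.1]) (by linarith)
      have u3 : (0:ℝ) ≤ (1+a*h) ^ (-q) := Real.rpow_nonneg (by nlinarith [ha.1]) _
      have u4 : (0:ℝ) ≤ (1+b*h) ^ (-q) := Real.rpow_nonneg (by nlinarith [hb.1]) _
      rw [abs_sub_le_iff]; constructor <;> linarith
    have hqN : |q| ≤ (N:ℝ) := by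
      rw [abs_le]; constructor <;> (simp only [hqdef]; linarith)
    -- min(x,2) ≤ 2 x^(2s) with x = |q| * (δ*h)
    set x : ℝ := |q| * (δ*h) with hxdef
    have hxnn : 0 ≤ x := mul_nonneg (abs_nonneg q) hx0
    have hmin : min x 2 ≤ 2 * x ^ (2*s) := by
      rcases eq_or_lt_of_le hxnn with hx | hx
    -- x = 0
      · rw [← hx, Real.zero_rpow (by positivity : (2:ℝ)*s ≠ 0)]
        simp
      · rcases le_or_gt x 1 with hx1 | hx1
        · have : x ≤ x ^ (2*s) := by
            calc x = x ^ (1:ℝ) := (Real.rpow_one x).symm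
              _ ≤ x ^ (2*s) := Real.rpow_le_rpow_of_exponent_ge hx hx1 (by linarith)
          calc min x 2 ≤ x := min_le_left _ _
            _ ≤ 2 * x ^ (2*s) := by nlinarith [Real.rpow_nonneg hxnn (2*s)]
        · have : (1:ℝ) ≤ x ^ (2*s) := Real.one_le_rpow hx1.le (by positivity)
          calc min x 2 ≤ 2 := min_le_right _ _
            _ ≤ 2 * x ^ (2*s) := by linarith
    have hqs : |q| ^ (2*s) ≤ (N:ℝ) := by
      rcases le_or_gt (|q|) 1 with h1 | h1
      · calc |q| ^ (2*s) ≤ 1 := Real.rpow_le_one (abs_nonneg q) h1 (by positivity)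
          _ ≤ (N:ℝ) := by linarith
      · calc |q| ^ (2*s) ≤ |q| ^ (1:ℝ) :=
            Real.rpow_le_rpow_of_exponent_le h1.le (by linarith)
          _ = |q| := Real.rpow_one _
          _ ≤ (N:ℝ) := hqN
    have hxpow : x ^ (2*s) = |q| ^ (2*s) * (δ*h) ^ (2*s) :=
      Real.mul_rpow (abs_nonneg q) hx0
    calc |(1+a*h) ^ (-q) - (1+b*h) ^ (-q)| ≤ min x 2 := by
          refine le_min ?_ hb2
          calc |(1+a*h) ^ (-q) - (1+b*h) ^ (-q)| ≤ |q| * h * δ := hlip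
            _ = x := by rw [hxdef]; ring
      _ ≤ 2 * x ^ (2*s) := hmin
      _ = 2 * (|q| ^ (2*s) * (δ*h) ^ (2*s)) := by rw [hxpow]
      _ ≤ 2*(N:ℝ) * (δ*h) ^ (2*s) := by
          nlinarith [Real.rpow_nonneg hx0 (2*s), hqs,
            Real.rpow_nonneg (abs_nonneg q) (2*s)]
  · -- q < 0 : then N = 2 and q = -s
    have hNeq : (N:ℝ) = 2 := by
      have : (N:ℝ) < 3 := by simp only [hqdef] at hq; linarith
      have hN3 : N < 3 := by exact_mod_cast this
      have : N = 2 := by omega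
      exact_mod_cast this
    have hqs : q = -s := by simp only [hqdef, hNeq]; ring
    rw [hqs, neg_neg]
    -- subadditivity bound : |(1+ah)^s - (1+bh)^s| ≤ (δ h)^s
    have hsub : |(1+a*h) ^ s - (1+b*h) ^ s| ≤ (δ*h) ^ s := by
      have key : ∀ x y : ℝ, 0 ≤ x → x ≤ y → y ≤ 1 →
          (1+y*h) ^ s - (1+x*h) ^ s ≤ ((y-x)*h) ^ s := by
        intro x y hx hxy hy1
        have h1 : (0:ℝ) ≤ 1 + x*h := by nlinarith
        have h2 : (0:ℝ) ≤ (y-x)*h := by nlinarith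
        have := aux_subadd (x := 1+x*h) (y := (y-x)*h) h1 h2 hs0.le (by linarith)
        have heq : 1 + x*h + (y-x)*h = 1 + y*h := by ring
        rw [heq] at this
        linarith [this]
      rcases le_total a b with hab | hab
      · have h5 := key a b ha.1 hab (hb.2.trans (by norm_num))
        have hmono : (1+a*h) ^ s ≤ (1+b*h) ^ s :=
          Real.rpow_le_rpow (by nlinarith [ha.1]) (by nlinarith) hs0.le
        have hδeq : δ = b - a := by
          rw [hδdef, abs_of_nonpos (by linarith)]; ring
        rw [abs_sub_comm, abs_of_nonneg (by linarith), hδeq]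
        exact h5
      · have h5 := key b a hb.1 hab (ha.2.trans (by norm_num))
        have hmono : (1+b*h) ^ s ≤ (1+a*h) ^ s :=
          Real.rpow_le_rpow (by nlinarith [hb.1]) (by nlinarith) hs0.le
        have hδeq : δ = a - b := abs_of_nonneg (by linarith)
        rw [abs_of_nonneg (by linarith), hδeq]
        exact h5
    -- Lipschitz bound with q = -s
    rw [hqs, neg_neg, abs_neg, abs_of_pos hs0] at hlip
    set x : ℝ := δ * h with hxdef
    have h2N : (1:ℝ) ≤ 2*(N:ℝ) := by linarith
    have hrn : (0:ℝ) ≤ x ^ (2*s) := Real.rpow_nonneg hx0 _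
    rcases eq_or_lt_of_le hx0 with hx | hx
    · have : (x:ℝ) ^ s = 0 := by rw [← hx, Real.zero_rpow hs0.ne']
      calc |(1+a*h) ^ s - (1+b*h) ^ s| ≤ x ^ s := hsub
        _ = 0 := this
        _ ≤ 2*(N:ℝ) * x ^ (2*s) := by positivity
    · rcases le_or_gt x 1 with hx1 | hx1
      · have hxx : x ≤ x ^ (2*s) := by
          calc x = x ^ (1:ℝ) := (Real.rpow_one x).symm
            _ ≤ x ^ (2*s) := Real.rpow_le_rpow_of_exponent_ge hx hx1 (by linarith)
        calc |(1+a*h) ^ s - (1+b*h) ^ s| ≤ s * h * δ := hlip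
          _ = s * x := by rw [hxdef]; ring
          _ ≤ x := by nlinarith
          _ ≤ x ^ (2*s) := hxx
          _ ≤ 2*(N:ℝ) * x ^ (2*s) := by nlinarith
      · have hxx : x ^ s ≤ x ^ (2*s) :=
          Real.rpow_le_rpow_of_exponent_le hx1.le (by linarith)
        calc |(1+a*h) ^ s - (1+b*h) ^ s| ≤ x ^ s := hsub
          _ ≤ x ^ (2*s) := hxx
          _ ≤ 2*(N:ℝ) * x ^ (2*s) := by nlinarith

lemma aux_p_diff (N : ℕ) (hN : 2 ≤ N) {a b : ℝ}
    (ha : a ∈ Set.Icc (0:ℝ) (1/2)) (hb : b ∈ Set.Icc (0:ℝ) (1/2)) :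
    |(1-a) ^ (((N:ℝ)-1)/2) - (1-b) ^ (((N:ℝ)-1)/2)| ≤ (N:ℝ) * |a-b| := by
  set p : ℝ := ((N:ℝ)-1)/2 with hpdef
  have hN2 : (2:ℝ) ≤ (N:ℝ) := by exact_mod_cast hN
  have hp0 : 0 < p := by simp only [hpdef]; linarith
  have key : ∀ x y : ℝ, 0 ≤ x → x ≤ y → y ≤ 1/2 →
      |(1-y) ^ p - (1-x) ^ p| ≤ (N:ℝ) * (y - x) := by
    intro x y hx hxy hy
    have hd : ∀ t ∈ Set.Icc x y, HasDerivAt (fun t : ℝ => (1-t) ^ p)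
        (p * (1-t) ^ (p-1) * (-1)) t := by
      intro t ht
      have h1 : (0:ℝ) < 1 - t := by
        have := ht.2; have := hy; linarith [ht.2.trans hy]
      have hinner : HasDerivAt (fun t : ℝ => 1 - t) (-1) t := by
        simpa using (hasDerivAt_id t).const_sub 1
      exact (Real.hasDerivAt_rpow_const (p := p) (Or.inl h1.ne')).comp t hinner
    have hC : ∀ t ∈ Set.Icc x y, |p * (1-t) ^ (p-1) * (-1)| ≤ (N:ℝ) := by
      intro t ht
      have ht2 : t ≤ 1/2 := ht.2.trans hy
      have ht0 : 0 ≤ t := hx.trans ht.1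
      have h1 : (0:ℝ) < 1 - t := by linarith
      have h2 : (1-t) ^ (p-1) ≤ 2 := by
        rcases le_or_gt 1 p with hp1 | hp1
        · calc (1-t) ^ (p-1) ≤ 1 :=
              Real.rpow_le_one h1.le (by linarith) (by linarith)
            _ ≤ 2 := by norm_num
        · calc (1-t) ^ (p-1) ≤ (1/2 : ℝ) ^ (p-1) :=
              Real.rpow_le_rpow_of_nonpos (by norm_num) (by linarith) (by linarith)
            _ = (1/2 : ℝ) ^ p / (1/2 : ℝ) ^ (1:ℝ) := by
              rw [← Real.rpow_sub (by norm_num)]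
            _ ≤ 2 := by
              rw [Real.rpow_one]
              have : (1/2 : ℝ) ^ p ≤ 1 :=
                Real.rpow_le_one (by norm_num) (by norm_num) hp0.le
              linarith
      have h3 : (0:ℝ) ≤ (1-t) ^ (p-1) := Real.rpow_nonneg h1.le _
      rw [abs_mul, abs_mul, abs_neg, abs_one, mul_one, abs_of_pos hp0,
        abs_of_nonneg h3]
      calc p * (1-t) ^ (p-1) ≤ p * 2 := by nlinarith
        _ = (N:ℝ) - 1 := by simp only [hpdef]; ring
        _ ≤ (N:ℝ) := by linarith
    have := aux_mvt hxy hd hC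
    linarith [this]
  rcases le_total a b with hab | hab
  · have h4 : |a - b| = b - a := by rw [abs_of_nonpos (by linarith)]; ring
    rw [h4, abs_sub_comm]
    exact key a b ha.1 hab hb.2
  · have h4 : |a - b| = a - b := abs_of_nonneg (by linarith)
    rw [h4]
    exact key b a hb.1 hab ha.2

lemma aux_G_integrable (N : ℕ) (hN : 2 ≤ N) {s T : ℝ} (hs0 : 0 < s) (hs1 : s < 1/2)
    (hT : T ∈ Set.Icc (0:ℝ) (1/2)) :
    IntegrableOn (fun h : ℝ =>
      h ^ (((N:ℝ)-3)/2) / ((1+T*h) ^ ((N:ℝ)/2-1-s) * (1+h) ^ (((N:ℝ)+2*s)/2)))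
      (Set.Ioi 0) := by
  have hN2 : (2:ℝ) ≤ (N:ℝ) := by exact_mod_cast hN
  set m : ℝ := ((N:ℝ)-3)/2 with hmdef
  set q : ℝ := (N:ℝ)/2-1-s with hqdef
  set r : ℝ := ((N:ℝ)+2*s)/2 with hrdef
  have hdom : IntegrableOn (fun h : ℝ => h ^ m * (1+h) ^ ((1:ℝ)/2 - r)) (Set.Ioi 0) := by
    apply aux_integrable
    · simp only [hmdef]; linarith
    · simp only [hmdef, hrdef]; linarith
  refine Integrable.mono hdom ?_ ?_
  · apply ContinuousOn.aestronglyMeasurable _ measurableSet_Ioi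
    apply ContinuousOn.div
    · exact continuousOn_id.rpow_const fun x hx => Or.inl (ne_of_gt hx)
    · apply ContinuousOn.mul
      · apply ContinuousOn.rpow_const
          (continuousOn_const.add (continuousOn_const.mul continuousOn_id))
        intro x hx
        have hx0 : (0:ℝ) < x := hx
        refine Or.inl (ne_of_gt ?_)
        show (0:ℝ) < 1 + T*x
        nlinarith [mul_nonneg hT.1 hx0.le]
      · apply ContinuousOn.rpow_const (continuousOn_const.add continuousOn_id)
        intro x hx
        have hx0 : (0:ℝ) < x := hx
        refine Or.inl (ne_of_gt ?_)
        show (0:ℝ) < 1 + x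
        linarith
    · intro x hx
      have hx0 : (0:ℝ) < x := hx
      have h1 : (0:ℝ) < 1 + T*x := by nlinarith [hT.1]
      have h2 : (0:ℝ) < 1 + x := by linarith
      positivity
  · filter_upwards [ae_restrict_mem measurableSet_Ioi] with x hx
    have hx0 : (0:ℝ) < x := hx
    have h1 : (0:ℝ) < 1 + T*x := by nlinarith [hT.1]
    have h2 : (0:ℝ) < 1 + x := by linarith
    have hq1 : (0:ℝ) < (1+T*x) ^ q := Real.rpow_pos_of_pos h1 _
    have hr1 : (0:ℝ) < (1+x) ^ r := Real.rpow_pos_of_pos h2 _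
    rw [Real.norm_eq_abs, Real.norm_eq_abs, abs_of_nonneg (by positivity),
      abs_of_nonneg (by positivity)]
    have hv : ((1+T*x) ^ q)⁻¹ ≤ (1+x) ^ ((1:ℝ)/2) := by
      rw [← Real.rpow_neg h1.le]
      exact aux_v_bound N hN hs0 hs1 hT hx0
    calc x ^ m / ((1+T*x) ^ q * (1+x) ^ r)
        = x ^ m * ((1+T*x) ^ q)⁻¹ * ((1+x) ^ r)⁻¹ := by
          rw [div_eq_mul_inv, mul_inv, mul_assoc]
      _ ≤ x ^ m * (1+x) ^ ((1:ℝ)/2) * ((1+x) ^ r)⁻¹ := by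
          have hxm : (0:ℝ) ≤ x ^ m := Real.rpow_nonneg hx0.le _
          apply mul_le_mul_of_nonneg_right _ (by positivity)
          exact mul_le_mul_of_nonneg_left hv hxm
      _ = x ^ m * (1+x) ^ ((1:ℝ)/2 - r) := by
          rw [mul_assoc, ← Real.rpow_neg h2.le, ← Real.rpow_add h2, sub_eq_add_neg]

lemma aux_pointwise (N : ℕ) (hN : 2 ≤ N) {s A B h : ℝ} (hs0 : 0 < s) (hs1 : s < 1/2)
    (hA : A ∈ Set.Icc (0:ℝ) (1/2)) (hB : B ∈ Set.Icc (0:ℝ) (1/2)) (hh : 0 < h) :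
    |(1-A) ^ (((N:ℝ)-1)/2) *
        (h ^ (((N:ℝ)-3)/2) / ((1+A*h) ^ ((N:ℝ)/2-1-s) * (1+h) ^ (((N:ℝ)+2*s)/2))) -
      (1-B) ^ (((N:ℝ)-1)/2) *
        (h ^ (((N:ℝ)-3)/2) / ((1+B*h) ^ ((N:ℝ)/2-1-s) * (1+h) ^ (((N:ℝ)+2*s)/2)))| ≤
    |A-B| ^ (2*s) *
      ((N:ℝ) * (h ^ (((N:ℝ)-3)/2) * (1+h) ^ ((1:ℝ)/2 - ((N:ℝ)+2*s)/2)) +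
       2*(N:ℝ) * (h ^ (((N:ℝ)-3)/2 + 2*s) * (1+h) ^ (-(((N:ℝ)+2*s)/2)))) := by
  have hN2 : (2:ℝ) ≤ (N:ℝ) := by exact_mod_cast hN
  set m : ℝ := ((N:ℝ)-3)/2 with hmdef
  set q : ℝ := (N:ℝ)/2-1-s with hqdef
  set r : ℝ := ((N:ℝ)+2*s)/2 with hrdef
  set p : ℝ := ((N:ℝ)-1)/2 with hpdef
  have hp0 : 0 < p := by simp only [hpdef]; linarith
  have h1A : (0:ℝ) < 1 + A*h := by nlinarith [mul_nonneg hA.1 hh.le]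
  have h1B : (0:ℝ) < 1 + B*h := by nlinarith [mul_nonneg hB.1 hh.le]
  have h1h : (0:ℝ) < 1 + h := by linarith
  set δ : ℝ := |A-B| with hδdef
  have hδ0 : 0 ≤ δ := abs_nonneg _
  have hδ1 : δ ≤ 1 := by
    rw [hδdef, abs_le]; constructor <;> nlinarith [hA.1, hA.2, hB.1, hB.2]
  -- δ ≤ δ^(2s)
  have hδpow : δ ≤ δ ^ (2*s) := by
    rcases eq_or_lt_of_le hδ0 with h0 | h0
    · rw [← h0, Real.zero_rpow (by positivity : (2:ℝ)*s ≠ 0)]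
    · calc δ = δ ^ (1:ℝ) := (Real.rpow_one δ).symm
        _ ≤ δ ^ (2*s) := Real.rpow_le_rpow_of_exponent_ge h0 hδ1 (by linarith)
  -- notation
  set uA : ℝ := (1+A*h) ^ (-q) with huA
  set uB : ℝ := (1+B*h) ^ (-q) with huB
  set w : ℝ := (1+h) ^ (-r) with hw
  have hxm : (0:ℝ) ≤ h ^ m := Real.rpow_nonneg hh.le _
  have hw0 : (0:ℝ) ≤ w := Real.rpow_nonneg h1h.le _
  have huA0 : (0:ℝ) ≤ uA := Real.rpow_nonneg h1A.le _
  have huB0 : (0:ℝ) ≤ uB := Real.rpow_nonneg h1B.le _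
  have hGA : h ^ m / ((1+A*h) ^ q * (1+h) ^ r) = h ^ m * uA * w := by
    rw [huA, hw, Real.rpow_neg h1A.le, Real.rpow_neg h1h.le, div_eq_mul_inv, mul_inv,
      mul_assoc]
  have hGB : h ^ m / ((1+B*h) ^ q * (1+h) ^ r) = h ^ m * uB * w := by
    rw [huB, hw, Real.rpow_neg h1B.le, Real.rpow_neg h1h.le, div_eq_mul_inv, mul_inv,
      mul_assoc]
  rw [hGA, hGB]
  have hsplit : (1-A) ^ p * (h ^ m * uA * w) - (1-B) ^ p * (h ^ m * uB * w) =
      ((1-A) ^ p - (1-B) ^ p) * (h ^ m * uA * w) +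
      (1-B) ^ p * ((uA - uB) * (h ^ m * w)) := by ring
  rw [hsplit]
  have hpB1 : (1-B) ^ p ≤ 1 :=
    Real.rpow_le_one (by linarith [hB.1, hB.2]) (by linarith [hB.1]) hp0.le
  have hpB0 : (0:ℝ) ≤ (1-B) ^ p := Real.rpow_nonneg (by linarith [hB.2]) _
  have hterm1 : |((1-A) ^ p - (1-B) ^ p) * (h ^ m * uA * w)| ≤
      δ ^ (2*s) * ((N:ℝ) * (h ^ m * (1+h) ^ ((1:ℝ)/2 - r))) := by
    rw [abs_mul]
    have h1 : |(1-A) ^ p - (1-B) ^ p| ≤ (N:ℝ) * δ := aux_p_diff N hN hA hB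
    have h2 : |h ^ m * uA * w| = h ^ m * uA * w := abs_of_nonneg (by positivity)
    have h3 : uA ≤ (1+h) ^ ((1:ℝ)/2) := aux_v_bound N hN hs0 hs1 hA hh
    have h4 : h ^ m * uA * w ≤ h ^ m * (1+h) ^ ((1:ℝ)/2 - r) := by
      have : (1+h) ^ ((1:ℝ)/2 - r) = (1+h) ^ ((1:ℝ)/2) * w := by
        rw [hw, ← Real.rpow_add h1h, sub_eq_add_neg]
      rw [this]
      calc h ^ m * uA * w ≤ h ^ m * (1+h) ^ ((1:ℝ)/2) * w := by
            apply mul_le_mul_of_nonneg_right _ hw0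
            exact mul_le_mul_of_nonneg_left h3 hxm
        _ = h ^ m * ((1+h) ^ ((1:ℝ)/2) * w) := by ring
    rw [h2]
    calc |(1-A) ^ p - (1-B) ^ p| * (h ^ m * uA * w)
        ≤ ((N:ℝ) * δ) * (h ^ m * (1+h) ^ ((1:ℝ)/2 - r)) := by
          apply mul_le_mul h1 h4 (by positivity) (by positivity)
      _ ≤ ((N:ℝ) * δ ^ (2*s)) * (h ^ m * (1+h) ^ ((1:ℝ)/2 - r)) := by
          have hnn : (0:ℝ) ≤ h ^ m * (1+h) ^ ((1:ℝ)/2 - r) := by positivity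
          apply mul_le_mul_of_nonneg_right _ hnn
          nlinarith
      _ = δ ^ (2*s) * ((N:ℝ) * (h ^ m * (1+h) ^ ((1:ℝ)/2 - r))) := by ring
  have hterm2 : |(1-B) ^ p * ((uA - uB) * (h ^ m * w))| ≤
      δ ^ (2*s) * (2*(N:ℝ) * (h ^ (m + 2*s) * (1+h) ^ (-r))) := by
    rw [abs_mul, abs_mul]
    have h1 : |uA - uB| ≤ 2*(N:ℝ) * (δ * h) ^ (2*s) := by
      rw [huA, huB]
      exact aux_u_diff N hN hs0 hs1 hA hB hh
    have h2 : |h ^ m * w| = h ^ m * w := abs_of_nonneg (by positivity)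
    have h3 : |(1-B) ^ p| = (1-B) ^ p := abs_of_nonneg hpB0
    rw [h2, h3]
    have hmul : (δ * h) ^ (2*s) = δ ^ (2*s) * h ^ (2*s) := Real.mul_rpow hδ0 hh.le
    have hhm : h ^ (2*s) * h ^ m = h ^ (m + 2*s) := by
      rw [← Real.rpow_add hh, add_comm]
    calc (1-B) ^ p * (|uA - uB| * (h ^ m * w))
        ≤ 1 * (|uA - uB| * (h ^ m * w)) := by
          apply mul_le_mul_of_nonneg_right hpB1 (by positivity)
      _ = |uA - uB| * (h ^ m * w) := by ring
      _ ≤ (2*(N:ℝ) * (δ * h) ^ (2*s)) * (h ^ m * w) := by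
          apply mul_le_mul_of_nonneg_right h1 (by positivity)
      _ = δ ^ (2*s) * (2*(N:ℝ) * (h ^ (2*s) * h ^ m * w)) := by
          rw [hmul]; ring
      _ = δ ^ (2*s) * (2*(N:ℝ) * (h ^ (m + 2*s) * (1+h) ^ (-r))) := by
          rw [hhm, hw]
  calc |((1-A) ^ p - (1-B) ^ p) * (h ^ m * uA * w) +
        (1-B) ^ p * ((uA - uB) * (h ^ m * w))|
      ≤ |((1-A) ^ p - (1-B) ^ p) * (h ^ m * uA * w)| +
        |(1-B) ^ p * ((uA - uB) * (h ^ m * w))| := abs_add_le _ _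
    _ ≤ δ ^ (2*s) * ((N:ℝ) * (h ^ m * (1+h) ^ ((1:ℝ)/2 - r))) +
        δ ^ (2*s) * (2*(N:ℝ) * (h ^ (m + 2*s) * (1+h) ^ (-r))) := add_le_add hterm1 hterm2
    _ = δ ^ (2*s) * ((N:ℝ) * (h ^ m * (1+h) ^ ((1:ℝ)/2 - r)) +
        2*(N:ℝ) * (h ^ (m + 2*s) * (1+h) ^ (-r))) := by ring

theorem stmt4 (N : ℕ) (hN : 2 ≤ N) (s : ℝ) (hs : s ∈ Set.Ioo (0:ℝ) (1/2)) :
    ∃ C > 0, ∀ A ∈ Set.Icc (0:ℝ) (1/2), ∀ B ∈ Set.Icc (0:ℝ) (1/2),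
      |((1-A) ^ (((N:ℝ)-1)/2) *
          ∫ h in Set.Ioi (0:ℝ),
            h ^ (((N:ℝ)-3)/2) /
              ((1+A*h) ^ ((N:ℝ)/2-1-s) * (1+h) ^ (((N:ℝ)+2*s)/2))) -
        ((1-B) ^ (((N:ℝ)-1)/2) *
          ∫ h in Set.Ioi (0:ℝ),
            h ^ (((N:ℝ)-3)/2) /
              ((1+B*h) ^ ((N:ℝ)/2-1-s) * (1+h) ^ (((N:ℝ)+2*s)/2)))| ≤
      C * |A - B| ^ (2*s) := by
  obtain ⟨hs0, hs1⟩ := hs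
  have hN2 : (2:ℝ) ≤ (N:ℝ) := by exact_mod_cast hN
  set D : ℝ → ℝ := fun h =>
    (N:ℝ) * (h ^ (((N:ℝ)-3)/2) * (1+h) ^ ((1:ℝ)/2 - ((N:ℝ)+2*s)/2)) +
    2*(N:ℝ) * (h ^ (((N:ℝ)-3)/2 + 2*s) * (1+h) ^ (-(((N:ℝ)+2*s)/2))) with hDdef
  have hDint : IntegrableOn D (Set.Ioi 0) := by
    apply Integrable.add
    · exact (aux_integrable (by linarith) (by linarith)).const_mul _
    · exact (aux_integrable (by linarith) (by linarith)).const_mul _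
  have hDnn : 0 ≤ ∫ h in Set.Ioi (0:ℝ), D h := by
    apply setIntegral_nonneg measurableSet_Ioi
    intro x hx
    have hx0 : (0:ℝ) < x := hx
    have h2 : (0:ℝ) < 1 + x := by linarith
    simp only [hDdef]
    positivity
  refine ⟨(∫ h in Set.Ioi (0:ℝ), D h) + 1, by linarith, ?_⟩
  intro A hA B hB
  have hGA := aux_G_integrable N hN hs0 hs1 hA
  have hGB := aux_G_integrable N hN hs0 hs1 hB
  rw [← MeasureTheory.integral_const_mul, ← MeasureTheory.integral_const_mul,
    ← MeasureTheory.integral_sub (hGA.const_mul _) (hGB.const_mul _)]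
  have hae : ∀ᵐ h ∂(volume.restrict (Set.Ioi (0:ℝ))),
      ‖(1-A) ^ (((N:ℝ)-1)/2) *
          (h ^ (((N:ℝ)-3)/2) / ((1+A*h) ^ ((N:ℝ)/2-1-s) * (1+h) ^ (((N:ℝ)+2*s)/2))) -
        (1-B) ^ (((N:ℝ)-1)/2) *
          (h ^ (((N:ℝ)-3)/2) / ((1+B*h) ^ ((N:ℝ)/2-1-s) * (1+h) ^ (((N:ℝ)+2*s)/2)))‖ ≤
      |A - B| ^ (2*s) * D h := by
    filter_upwards [ae_restrict_mem measurableSet_Ioi] with x hx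
    rw [Real.norm_eq_abs]
    exact aux_pointwise N hN hs0 hs1 hA hB hx
  calc |∫ h in Set.Ioi (0:ℝ),
        ((1-A) ^ (((N:ℝ)-1)/2) *
          (h ^ (((N:ℝ)-3)/2) / ((1+A*h) ^ ((N:ℝ)/2-1-s) * (1+h) ^ (((N:ℝ)+2*s)/2))) -
        (1-B) ^ (((N:ℝ)-1)/2) *
          (h ^ (((N:ℝ)-3)/2) / ((1+B*h) ^ ((N:ℝ)/2-1-s) * (1+h) ^ (((N:ℝ)+2*s)/2))))|
      ≤ ∫ h in Set.Ioi (0:ℝ), |A - B| ^ (2*s) * D h := by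
        have := MeasureTheory.norm_integral_le_of_norm_le (hDint.const_mul (|A - B| ^ (2*s))) hae
        simpa [Real.norm_eq_abs] using this
    _ = |A - B| ^ (2*s) * ∫ h in Set.Ioi (0:ℝ), D h := MeasureTheory.integral_const_mul _ _
    _ ≤ ((∫ h in Set.Ioi (0:ℝ), D h) + 1) * |A - B| ^ (2*s) := by
        rw [mul_comm]
        exact mul_le_mul_of_nonneg_right (by linarith)
          (Real.rpow_nonneg (abs_nonneg _) _)
end

section
/- Let N ≥ 2, s ∈ (0,1), and for r, R̃ > 0 with r ≠ R̃ set I = ∫_{S^{N-1}} |r e₁ - R̃ θ|^{-(N+2s)} dθ (integral over the unit sphere with respect to surface measure). Then I = |r - R̃|^{-1-2s} (r R̃)^{-(N-1)/2} ∫_{τ(S^{N-1} - e₁)} (1 + |θ|²)^{-(N+2s)/2} dθ, where τ = √(r R̃)/|r - R̃| and τ(S^{N-1} - e₁) denotes the sphere of radius τ centered at -τ e₁. -/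
open MeasureTheory Real Set
open scoped Pointwise NNReal ENNReal

theorem map_smul_hausdorff {N : ℕ} (τ : ℝ) (hτ : 0 < τ) (d : ℝ) (hd : 0 ≤ d) :
    Measure.map (τ • · : EuclideanSpace ℝ (Fin N) → _) μH[d] = ((‖τ‖₊ ^ d : ℝ≥0) : ℝ≥0∞)⁻¹ • μH[d] := by
  have hne : (‖τ‖₊ ^ d : ℝ≥0) ≠ 0 := by
    simp [NNReal.rpow_eq_zero_iff, hτ.ne']
  ext A hA
  rw [Measure.map_apply (measurable_const_smul τ) hA, Set.preimage_smul₀ hτ.ne' A,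
    Measure.hausdorffMeasure_smul₀ hd (inv_ne_zero hτ.ne') A, Measure.smul_apply,
    show (‖τ⁻¹‖₊ ^ d : ℝ≥0) = (‖τ‖₊ ^ d)⁻¹ by rw [nnnorm_inv, NNReal.inv_rpow],
    ENNReal.smul_def, smul_eq_mul, ENNReal.coe_inv hne, smul_eq_mul]

theorem stmt8 (N : ℕ) (hN : 2 ≤ N) (s r R' : ℝ) (hs : s ∈ Set.Ioo (0:ℝ) 1)
    (hr : 0 < r) (hR : 0 < R') (hne : r ≠ R') :
    ∀ e₁ : EuclideanSpace ℝ (Fin N), e₁ = EuclideanSpace.single ⟨0, by omega⟩ (1:ℝ) →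
    ∀ τ : ℝ, τ = Real.sqrt (r * R') / |r - R'| →
    (∫ θ in Metric.sphere (0 : EuclideanSpace ℝ (Fin N)) 1,
        ‖r • e₁ - R' • θ‖ ^ (-((N:ℝ) + 2*s)) ∂(μH[(N:ℝ)-1])) =
      |r - R'| ^ (-1 - 2*s) * (r * R') ^ (-((N:ℝ)-1)/2) *
        ∫ θ in Metric.sphere (-(τ • e₁)) τ,
          (1 + ‖θ‖^2) ^ (-((N:ℝ)+2*s)/2) ∂(μH[(N:ℝ)-1]) := by
  intro e₁ he₁ τ hτdef
  set d : ℝ := (N:ℝ) - 1 with hd_def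
  have hd : 0 ≤ d := by
    have : (2:ℝ) ≤ N := by exact_mod_cast hN
    simp only [hd_def]; linarith
  have hrR : 0 < r * R' := mul_pos hr hR
  have hsub : r - R' ≠ 0 := sub_ne_zero.mpr hne
  have habs : 0 < |r - R'| := abs_pos.mpr hsub
  have hτ : 0 < τ := by
    rw [hτdef]; exact div_pos (Real.sqrt_pos.mpr hrR) habs
  have he₁norm : ‖e₁‖ = 1 := by
    rw [he₁, EuclideanSpace.norm_single]; norm_num
  -- τ² = r R' / (r - R')²
  have hτsq : τ ^ 2 = r * R' / (r - R') ^ 2 := by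
    rw [hτdef, div_pow, Real.sq_sqrt hrR.le, sq_abs]
  set φ : EuclideanSpace ℝ (Fin N) → EuclideanSpace ℝ (Fin N) :=
    fun x => τ • x + -(τ • e₁) with hφ_def
  set c : ℝ≥0 := ‖τ‖₊ ^ d with hc_def
  have hcne : c ≠ 0 := by simp [hc_def, NNReal.rpow_eq_zero_iff, hτ.ne']
  have hmapφ : Measure.map φ μH[d] = ((c : ℝ≥0∞))⁻¹ • μH[d] := by
    have hφcomp : φ = (· + -(τ • e₁)) ∘ (τ • ·) := rfl
    rw [hφcomp, ← Measure.map_map (measurable_add_const _) (measurable_const_smul τ),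
      map_smul_hausdorff τ hτ d hd, Measure.map_smul, map_add_right_eq_self]
  have hμ : (μH[d] : Measure (EuclideanSpace ℝ (Fin N))) = (c : ℝ≥0∞) • Measure.map φ μH[d] := by
    rw [hmapφ, smul_smul, ENNReal.mul_inv_cancel (by exact_mod_cast hcne) (by simp), one_smul]
  have hφmeas : Measurable φ := (measurable_const_smul τ).add_const _
  -- preimage of the sphere
  have hpre : φ ⁻¹' (Metric.sphere (-(τ • e₁)) τ) = Metric.sphere (0 : EuclideanSpace ℝ (Fin N)) 1 := by
    ext x
    simp only [Set.mem_preimage, Metric.mem_sphere, dist_eq_norm, hφ_def, sub_zero]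
    rw [add_sub_cancel_right, norm_smul, Real.norm_eq_abs, abs_of_pos hτ]
    constructor
    · intro h; nlinarith [norm_nonneg x]
    · intro h; rw [h, mul_one]
  -- continuity of the integrand
  have hcont : Continuous fun θ : EuclideanSpace ℝ (Fin N) => (1 + ‖θ‖^2) ^ (-((N:ℝ)+2*s)/2) := by
    apply Continuous.rpow_const (continuous_const.add (continuous_norm.pow 2))
    intro x; left; have hpos : (0:ℝ) < 1 + ‖x‖^2 := by positivity
    exact hpos.ne'
  -- change of variables in RHS integral
  have hchg : (∫ θ in Metric.sphere (-(τ • e₁)) τ,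
      (1 + ‖θ‖^2) ^ (-((N:ℝ)+2*s)/2) ∂(μH[d])) =
      (c : ℝ≥0∞).toReal * ∫ x in Metric.sphere (0 : EuclideanSpace ℝ (Fin N)) 1,
        (1 + ‖φ x‖^2) ^ (-((N:ℝ)+2*s)/2) ∂(μH[d]) := by
    conv_lhs => rw [hμ]
    rw [Measure.restrict_smul, integral_smul_measure,
      setIntegral_map (Metric.isClosed_sphere.measurableSet)
        hcont.aestronglyMeasurable hφmeas.aemeasurable, hpre]
    rfl
  -- pointwise identity on the unit sphere
  have hXsq : ∀ x : EuclideanSpace ℝ (Fin N), ‖x‖ = 1 →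
      ‖r • e₁ - R' • x‖^2 = (r - R')^2 + r * R' * ‖x - e₁‖^2 := by
    intro x hx
    rw [norm_sub_sq_real, norm_sub_sq_real, norm_smul, norm_smul,
      real_inner_smul_left, real_inner_smul_right, hx, he₁norm,
      real_inner_comm x e₁]
    simp only [Real.norm_eq_abs, abs_of_pos hr, abs_of_pos hR]
    ring
  have hpt : ∀ x ∈ Metric.sphere (0 : EuclideanSpace ℝ (Fin N)) 1,
      (1 + ‖φ x‖^2) ^ (-((N:ℝ)+2*s)/2) =
        |r - R'| ^ ((N:ℝ)+2*s) * ‖r • e₁ - R' • x‖ ^ (-((N:ℝ) + 2*s)) := by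
    intro x hx
    rw [mem_sphere_zero_iff_norm] at hx
    have hφx : ‖φ x‖ = τ * ‖x - e₁‖ := by
      rw [hφ_def]
      show ‖τ • x + -(τ • e₁)‖ = _
      rw [show τ • x + -(τ • e₁) = τ • (x - e₁) by rw [smul_sub, sub_eq_add_neg],
        norm_smul, Real.norm_eq_abs, abs_of_pos hτ]
    have hsq : (0:ℝ) < (r - R')^2 :=
      lt_of_le_of_ne (sq_nonneg _) (Ne.symm (pow_ne_zero 2 hsub))
    have hXpos : 0 < ‖r • e₁ - R' • x‖^2 := by
      rw [hXsq x hx]; nlinarith [sq_nonneg ‖x - e₁‖]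
    have key : 1 + ‖φ x‖^2 = ‖r • e₁ - R' • x‖^2 / (r - R')^2 := by
      rw [hφx, mul_pow, hτsq, hXsq x hx]
      field_simp
    rw [key, Real.div_rpow (sq_nonneg _) (sq_nonneg _)]
    have hn : (‖r • e₁ - R' • x‖^2) ^ (-((N:ℝ)+2*s)/2) =
        ‖r • e₁ - R' • x‖ ^ (-((N:ℝ) + 2*s)) := by
      rw [← Real.rpow_natCast ‖r • e₁ - R' • x‖ 2, ← Real.rpow_mul (norm_nonneg _),
        show ((2:ℕ):ℝ) * (-((N:ℝ)+2*s)/2) = -((N:ℝ) + 2*s) by push_cast; ring]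
    have hden : ((r - R')^2) ^ (-((N:ℝ)+2*s)/2) = |r - R'| ^ (-((N:ℝ)+2*s)) := by
      rw [← sq_abs, ← Real.rpow_natCast |r - R'| 2, ← Real.rpow_mul (abs_nonneg _),
        show ((2:ℕ):ℝ) * (-((N:ℝ)+2*s)/2) = -((N:ℝ) + 2*s) by push_cast; ring]
    rw [hn, hden, Real.rpow_neg (abs_nonneg _) ((N:ℝ)+2*s), div_eq_mul_inv, inv_inv, mul_comm]
  -- rewrite the inner integral
  have hint : (∫ x in Metric.sphere (0 : EuclideanSpace ℝ (Fin N)) 1,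
      (1 + ‖φ x‖^2) ^ (-((N:ℝ)+2*s)/2) ∂(μH[d])) =
      |r - R'| ^ ((N:ℝ)+2*s) * ∫ x in Metric.sphere (0 : EuclideanSpace ℝ (Fin N)) 1,
        ‖r • e₁ - R' • x‖ ^ (-((N:ℝ) + 2*s)) ∂(μH[d]) := by
    rw [setIntegral_congr_fun Metric.isClosed_sphere.measurableSet hpt,
      integral_const_mul]
  -- value of the constant
  have hc_real : (c : ℝ≥0∞).toReal = τ ^ d := by
    simp only [hc_def, ENNReal.coe_toReal, NNReal.coe_rpow, coe_nnnorm, Real.norm_eq_abs,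
      abs_of_pos hτ]
  have hτd : τ ^ d = (r * R') ^ (d/2) * |r - R'| ^ (-d) := by
    rw [hτdef, Real.div_rpow (Real.sqrt_nonneg _) (abs_nonneg _), Real.sqrt_eq_rpow,
      ← Real.rpow_mul hrR.le, show 1/2 * d = d/2 by ring, Real.rpow_neg (abs_nonneg _),
      div_eq_mul_inv]
  rw [hchg, hint, hc_real, hτd]
  rw [show |r - R'| ^ (-1 - 2*s) * (r * R') ^ (-((N:ℝ)-1)/2) *
      ((r * R') ^ (d/2) * |r - R'| ^ (-d) *
        (|r - R'| ^ ((N:ℝ)+2*s) * ∫ θ in Metric.sphere (0 : EuclideanSpace ℝ (Fin N)) 1,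
          ‖r • e₁ - R' • θ‖ ^ (-((N:ℝ) + 2*s)) ∂(μH[d]))) =
      ((r * R') ^ (-((N:ℝ)-1)/2) * (r * R') ^ (d/2)) *
      (|r - R'| ^ (-1 - 2*s) * |r - R'| ^ (-d) * |r - R'| ^ ((N:ℝ)+2*s)) *
        ∫ θ in Metric.sphere (0 : EuclideanSpace ℝ (Fin N)) 1,
          ‖r • e₁ - R' • θ‖ ^ (-((N:ℝ) + 2*s)) ∂(μH[d]) by ring,
    ← Real.rpow_add hrR, ← Real.rpow_add habs, ← Real.rpow_add habs,
    show -((N:ℝ)-1)/2 + d/2 = 0 by rw [hd_def]; ring,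
    show -1 - 2*s + -d + ((N:ℝ)+2*s) = 0 by rw [hd_def]; ring,
    Real.rpow_zero, Real.rpow_zero, one_mul, one_mul]
end
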